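/- arXiv:2501.17583 — 7 statements merged into one kernel-verified Lean document; each statement's English description precedes it below -/
import Mathlib

section
/- Let m ≥ 1 and let F₁, …, F_p ∈ ℝ⟦X₁, …, X_m⟧ be nonzero formal power series. Then all of F₁, …, F_p are normal if and only if the product F₁ ⋯ F_p is normal. -/
/-!
`F` is normal iff it is associated to a monomial in the variables, and each `X_j` is a prime element
(it is the variable of a power series ring over the series in the remaining variables). Products of
such associates are again such associates. Conversely, in a cancellative monoid a divisor of a
monomial in primes is associated to a monomial: a prime `p` dividing `a * b` divides `a` or `b` and
can be cancelled from both sides, which lowers the total degree.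
-/

/-- A nonzero formal power series `F ∈ ℝ⟦X₁, …, X_m⟧` is *normal* if `F = X^α · U`
for some `α ∈ ℕ^m` and some unit `U`. -/
def IsNormal {m : ℕ} (F : MvPowerSeries (Fin m) ℝ) : Prop :=
  ∃ (α : Fin m → ℕ) (U : MvPowerSeries (Fin m) ℝ),
    IsUnit U ∧ F = (∏ i, MvPowerSeries.X i ^ α i) * U

open MvPowerSeries

theorem MvPowerSeries.prime_X {σ R : Type*} [CommRing R] [IsDomain R] (j : σ) :
    Prime (X j : MvPowerSeries σ R) := by
  classical
  let e := (renameEquiv R (Equiv.optionSubtypeNe j).symm).trans (optionEquivLeft _ R)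
  have he : e (X j) = PowerSeries.X := by
    simp [e, renameEquiv, rename_X, optionEquivLeft_X_none]
  have := NoZeroDivisors.to_isDomain (MvPowerSeries {i // i ≠ j} R)
  rw [← MulEquiv.prime_iff e, he]
  exact PowerSeries.X_prime

section Monomial

variable {M ι : Type*} [CommMonoidWithZero M] [Fintype ι]

def IsAssocMonomial (p : ι → M) (a : M) : Prop :=
  ∃ β : ι → ℕ, Associated (∏ i, p i ^ β i) a

variable {p : ι → M}

theorem prod_pow_add (β γ : ι → ℕ) :
    ∏ i, p i ^ (β + γ) i = (∏ i, p i ^ β i) * ∏ i, p i ^ γ i := by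
  simp only [Pi.add_apply, pow_add, Finset.prod_mul_distrib]

theorem prod_pow_add_single [DecidableEq ι] (β : ι → ℕ) (j : ι) :
    ∏ i, p i ^ (β + Pi.single j 1 : ι → ℕ) i = p j * ∏ i, p i ^ β i := by
  rw [prod_pow_add, mul_comm]
  simp [Pi.single_apply, pow_ite]

theorem isAssocMonomial_one : IsAssocMonomial p 1 :=
  ⟨0, by simp⟩

theorem IsAssocMonomial.mul {a b : M} (ha : IsAssocMonomial p a) (hb : IsAssocMonomial p b) :
    IsAssocMonomial p (a * b) := by
  obtain ⟨β, hβ⟩ := ha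
  obtain ⟨γ, hγ⟩ := hb
  exact ⟨β + γ, (prod_pow_add (p := p) β γ) ▸ hβ.mul_mul hγ⟩

theorem IsAssocMonomial.prod {κ : Type*} (s : Finset κ) {f : κ → M}
    (hf : ∀ k ∈ s, IsAssocMonomial p (f k)) : IsAssocMonomial p (∏ k ∈ s, f k) :=
  Finset.prod_induction f (IsAssocMonomial p) (fun _ _ => IsAssocMonomial.mul) isAssocMonomial_one hf

theorem IsAssocMonomial.of_mul_left [IsCancelMulZero M] (hp : ∀ i, Prime (p i)) {a b : M}
    (h : IsAssocMonomial p (a * b)) : IsAssocMonomial p a := by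
  classical
  obtain ⟨α, hα⟩ := h
  induction hn : ∑ i, α i generalizing a b α with
  | zero =>
    have hα0 : α = 0 := funext fun i => Finset.sum_eq_zero_iff.mp hn i (Finset.mem_univ i)
    have hab : IsUnit (a * b) := hα.isUnit (by simp [hα0])
    exact ⟨0, by simpa using (associated_one_iff_isUnit.mpr (isUnit_of_mul_isUnit_left hab)).symm⟩
  | succ n ih =>
    obtain ⟨j, hj⟩ : ∃ j, α j ≠ 0 := by
      by_contra! h
      simp [h] at hn
    obtain ⟨α', rfl⟩ : ∃ α', α = α' + Pi.single j 1 := by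
      refine ⟨α - Pi.single j 1, (tsub_add_cancel_of_le fun i => ?_).symm⟩
      rcases eq_or_ne i j with rfl | hi
      · simpa [Nat.one_le_iff_ne_zero] using hj
      · simp [hi]
    have hn' : ∑ i, α' i = n := by
      simpa [Finset.sum_add_distrib, Pi.single_apply] using hn
    rw [prod_pow_add_single] at hα
    rcases (hp j).dvd_or_dvd ((dvd_mul_right _ _).trans hα.dvd) with ⟨a', rfl⟩ | ⟨b', rfl⟩
    · rw [mul_assoc] at hα
      obtain ⟨β, hβ⟩ := ih α' (hα.of_mul_left (.refl _) (hp j).ne_zero) hn'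
      refine ⟨β + Pi.single j 1, ?_⟩
      rw [prod_pow_add_single]
      exact (Associated.refl _).mul_mul hβ
    · rw [mul_left_comm a] at hα
      exact ih α' (hα.of_mul_left (.refl _) (hp j).ne_zero) hn'

theorem IsAssocMonomial.of_dvd [IsCancelMulZero M] (hp : ∀ i, Prime (p i)) {a b : M}
    (hab : a ∣ b) (hb : IsAssocMonomial p b) : IsAssocMonomial p a := by
  obtain ⟨c, rfl⟩ := hab
  exact hb.of_mul_left hp

end Monomial

theorem isNormal_iff_isAssocMonomial {m : ℕ} (F : MvPowerSeries (Fin m) ℝ) :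
    IsNormal F ↔ IsAssocMonomial X F := by
  constructor
  · rintro ⟨α, U, hU, rfl⟩
    exact ⟨α, hU.unit, rfl⟩
  · rintro ⟨α, u, hu⟩
    exact ⟨α, u, u.isUnit, hu.symm⟩

theorem normal_iff_prod_normal_general (m p : ℕ) (F : Fin p → MvPowerSeries (Fin m) ℝ) :
    (∀ i, IsNormal (F i)) ↔ IsNormal (∏ i, F i) := by
  simp only [isNormal_iff_isAssocMonomial]
  exact ⟨fun h => .prod _ fun i _ => h i,
    fun h i => h.of_dvd prime_X (Finset.dvd_prod_of_mem F (Finset.mem_univ i))⟩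

/-- Nonzero series `F₁, …, F_p` are all normal iff their product is normal. -/
theorem normal_iff_prod_normal (m p : ℕ) (hm : 1 ≤ m)
    (F : Fin p → MvPowerSeries (Fin m) ℝ) (hF : ∀ i, F i ≠ 0) :
    (∀ i, IsNormal (F i)) ↔ IsNormal (∏ i, F i) :=
  normal_iff_prod_normal_general m p F
end

section
/- Let m ≥ 1 and let F, G ∈ ℝ⟦X₁, …, X_m⟧ be nonzero formal power series such that F, G and F − G are all normal. Then F divides G or G divides F in ℝ⟦X₁, …, X_m⟧. -/
namespace MvPowerSeries

variable {σ R : Type*}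

section CommSemiring

variable [CommSemiring R]

theorem prod_X_pow_eq_monomial [Fintype σ] (α : σ → ℕ) :
    ∏ i, (X i : MvPowerSeries σ R) ^ α i = monomial (Finsupp.equivFunOnFinite.symm α) 1 := by
  classical
  have h := congrArg (MvPolynomial.coeToMvPowerSeries.ringHom (σ := σ) (R := R))
    (MvPolynomial.prod_X_pow α Finset.univ)
  simp only [map_prod, map_pow, MvPolynomial.coeToMvPowerSeries.ringHom_apply,
    MvPolynomial.coe_X, MvPolynomial.coe_monomial] at h
  rw [h]
  congr
  ext i
  simp

theorem coeff_monomial_one_mul_of_not_le {A d : σ →₀ ℕ} (h : ¬A ≤ d) (U : MvPowerSeries σ R) :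
    coeff d (monomial A 1 * U) = 0 := by
  rw [coeff_monomial_mul, if_neg h]

theorem coeff_monomial_one_mul_self_ne_zero [Nontrivial R] (A : σ →₀ ℕ) {U : MvPowerSeries σ R}
    (hU : IsUnit U) : coeff A (monomial A 1 * U) ≠ 0 := by
  rw [coeff_monomial_mul, if_pos le_rfl, tsub_self, one_mul, coeff_zero_eq_constantCoeff_apply]
  exact (isUnit_constantCoeff U hU).ne_zero

theorem monomial_one_mul_dvd_monomial_one_mul {A B : σ →₀ ℕ} (h : A ≤ B)
    {U : MvPowerSeries σ R} (hU : IsUnit U) (V : MvPowerSeries σ R) :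
    monomial A 1 * U ∣ monomial B 1 * V := by
  refine dvd_mul_of_dvd_left ((hU.mul_right_dvd).mpr ⟨monomial (B - A) 1, ?_⟩) V
  rw [monomial_mul_monomial, add_tsub_cancel_of_le h, mul_one]

end CommSemiring

theorem le_or_le_of_monomial_mul_sub_monomial_mul [CommRing R] [Nontrivial R]
    {A B C : σ →₀ ℕ} {U V W : MvPowerSeries σ R} (hU : IsUnit U) (hV : IsUnit V) (hW : IsUnit W)
    (h : monomial A 1 * U - monomial B 1 * V = monomial C 1 * W) : A ≤ B ∨ B ≤ A := by
  by_contra! ⟨hAB, hBA⟩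
  have hCB : C ≤ B := by
    by_contra hCB
    have := congrArg (coeff B) h
    rw [map_sub, coeff_monomial_one_mul_of_not_le hAB, coeff_monomial_one_mul_of_not_le hCB,
      zero_sub, neg_eq_zero] at this
    exact coeff_monomial_one_mul_self_ne_zero B hV this
  have hCA : C ≤ A := by
    by_contra hCA
    have := congrArg (coeff A) h
    rw [map_sub, coeff_monomial_one_mul_of_not_le hBA, coeff_monomial_one_mul_of_not_le hCA,
      sub_zero] at this
    exact coeff_monomial_one_mul_self_ne_zero A hU this
  have := congrArg (coeff C) h
  rw [map_sub, coeff_monomial_one_mul_of_not_le (fun hAC => hAB (hAC.trans hCB)),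
    coeff_monomial_one_mul_of_not_le (fun hBC => hBA (hBC.trans hCA)), sub_zero] at this
  exact coeff_monomial_one_mul_self_ne_zero C hW this.symm

end MvPowerSeries

open MvPowerSeries

theorem IsNormal.exists_monomial_mul {m : ℕ} {F : MvPowerSeries (Fin m) ℝ} (hF : IsNormal F) :
    ∃ (A : Fin m →₀ ℕ) (U : MvPowerSeries (Fin m) ℝ), IsUnit U ∧ F = monomial A 1 * U := by
  obtain ⟨α, U, hU, rfl⟩ := hF
  exact ⟨_, U, hU, by rw [prod_X_pow_eq_monomial]⟩

theorem normal_sub_normal_dvd_general (m : ℕ)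
    (F G : MvPowerSeries (Fin m) ℝ)
    (hF : IsNormal F) (hG : IsNormal G) (hFG : IsNormal (F - G)) :
    F ∣ G ∨ G ∣ F := by
  obtain ⟨A, U, hU, rfl⟩ := hF.exists_monomial_mul
  obtain ⟨B, V, hV, rfl⟩ := hG.exists_monomial_mul
  obtain ⟨C, W, hW, hFG⟩ := hFG.exists_monomial_mul
  rcases le_or_le_of_monomial_mul_sub_monomial_mul hU hV hW hFG with hAB | hBA
  · exact .inl (monomial_one_mul_dvd_monomial_one_mul hAB hU V)
  · exact .inr (monomial_one_mul_dvd_monomial_one_mul hBA hV U)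

/-- If `F`, `G` and `F − G` are all normal, then `F ∣ G` or `G ∣ F`. -/
theorem normal_sub_normal_dvd (m : ℕ) (hm : 1 ≤ m)
    (F G : MvPowerSeries (Fin m) ℝ) (hF0 : F ≠ 0) (hG0 : G ≠ 0)
    (hF : IsNormal F) (hG : IsNormal G) (hFG : IsNormal (F - G)) :
    F ∣ G ∨ G ∣ F :=
  normal_sub_normal_dvd_general m F G hF hG hFG
end

section
/- Let m ≥ 2, let i, j ∈ {1, …, m} with i ≠ j, and let λ ∈ ℝ. The ring endomorphism of ℝ⟦X₁, …, X_m⟧ given by the substitution X_i ↦ X_j·(λ + X_i) and X_k ↦ X_k for k ≠ i (this substitution is well defined because X_j·(λ + X_i) has zero constant term)is injective. -/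
/-!
The chart sends `X^α` to `X^(α - αᵢ eᵢ + αᵢ eⱼ) (λ + Xᵢ)^αᵢ`. If `F ≠ 0`, pick `α` in the support
of `F` with `αⱼ` minimal and look at the coefficient of `X^(α + αᵢ eⱼ)` in `φ F`. The term `X^α`
contributes `1` to it, and any other `X^α'` contributing to it has `α'ᵢ > αᵢ` and
`α'ᵢ + α'ⱼ = αᵢ + αⱼ`, hence `α'ⱼ < αⱼ`, so its coefficient in `F` vanishes. Thus the coefficient
of `X^(α + αᵢ eⱼ)` in `φ F` is the nonzero coefficient of `X^α` in `F`. The order condition on `φ`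
is what lets this coefficient be computed from a finite truncation of `F`.
-/

/-- `IsSubstitutionBy σ φ` says that the ℝ-algebra endomorphism `φ` of
`ℝ⟦X₁, …, X_m⟧` is the substitution `X_k ↦ σ k`: it sends each variable `X_k`
to `σ k`, and it does not decrease the order of series (which, together with the
values on the variables, uniquely determines the substitution endomorphism when
each `σ k` has zero constant term). -/
def IsSubstitutionBy {m : ℕ} (σ : Fin m → MvPowerSeries (Fin m) ℝ)
    (φ : MvPowerSeries (Fin m) ℝ →ₐ[ℝ] MvPowerSeries (Fin m) ℝ) : Prop :=
  (∀ k, φ (MvPowerSeries.X k) = σ k) ∧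
  ∀ (F : MvPowerSeries (Fin m) ℝ) (d : ℕ),
    (∀ α : Fin m →₀ ℕ, (∑ j, α j) < d → MvPowerSeries.coeff (R := ℝ) α F = 0) →
    ∀ β : Fin m →₀ ℕ, (∑ j, β j) < d → MvPowerSeries.coeff (R := ℝ) β (φ F) = 0

open MvPowerSeries Finsupp

section BlowupChart

variable {σ R : Type*} [CommSemiring R]

theorem MvPowerSeries.coeff_C_add_X_pow [DecidableEq σ] (a : R) (i : σ) (n : ℕ)
    (γ : σ →₀ ℕ) :
    coeff γ ((C a + X i) ^ n) =
      if γ = single i (γ i) then n.choose (γ i) * a ^ (n - γ i) else 0 := by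
  have hterm : ∀ t, X i ^ t * C a ^ (n - t) * (n.choose t : MvPowerSeries σ R) =
      monomial (single i t) (n.choose t * a ^ (n - t)) := by
    intro t
    rw [X_pow_eq, ← map_pow, ← map_natCast C, mul_assoc, ← map_mul, ← monomial_zero_eq_C_apply,
      monomial_mul_monomial, add_zero, one_mul, mul_comm]
  simp_rw [add_comm (C a), add_pow, hterm, map_sum, coeff_monomial]
  split_ifs with hγ
  · obtain ⟨s, rfl⟩ : ∃ s, γ = single i s := ⟨_, hγ⟩
    simp_rw [single_eq_same, (single_injective i).eq_iff, Finset.sum_ite_eq, Finset.mem_range]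
    split_ifs with hs
    · rfl
    · rw [Nat.choose_eq_zero_of_lt (by omega), Nat.cast_zero, zero_mul]
  · refine Finset.sum_eq_zero fun t _ => if_neg fun h => hγ ?_
    rw [h, single_eq_same]

theorem MvPowerSeries.prod_X_pow_eq_monomial_s2 [Fintype σ] (α : σ →₀ ℕ) :
    ∏ k, (X k : MvPowerSeries σ R) ^ α k = monomial α 1 := by
  rw [monomial_one_eq, prod_fintype _ _ fun _ => pow_zero _]

variable [Fintype σ] [DecidableEq σ] (i j : σ) (a : R)

noncomputable def blowupChart (k : σ) : MvPowerSeries σ R :=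
  if k = i then X j * (C a + X i) else X k

theorem prod_blowupChart_pow (α : σ →₀ ℕ) :
    ∏ k, blowupChart i j a k ^ α k =
      monomial (α.erase i + single j (α i)) 1 * (C a + X i) ^ α i := by
  have hrest : ∏ k ∈ Finset.univ.erase i, blowupChart i j a k ^ α k =
      monomial (α.erase i) 1 := by
    rw [← prod_X_pow_eq_monomial_s2, ← Finset.mul_prod_erase _ _ (Finset.mem_univ i), erase_same,
      pow_zero, one_mul]
    refine Finset.prod_congr rfl fun k hk => ?_
    rw [blowupChart, if_neg (Finset.ne_of_mem_erase hk), erase_ne (Finset.ne_of_mem_erase hk)]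
  rw [← Finset.mul_prod_erase _ _ (Finset.mem_univ i), hrest, blowupChart, if_pos rfl, mul_pow,
    X_pow_eq, ← one_mul (1 : R), ← monomial_mul_monomial, one_mul]
  ring

theorem coeff_prod_blowupChart_pow_self (α : σ →₀ ℕ) :
    coeff (α + single j (α i)) (∏ k, blowupChart i j a k ^ α k) = 1 := by
  have hβ : α + single j (α i) = (α.erase i + single j (α i)) + single i (α i) := by
    rw [add_right_comm, erase_add_single]
  rw [prod_blowupChart_pow, hβ, coeff_monomial_mul, if_pos le_self_add, add_tsub_cancel_left,
    one_mul, coeff_C_add_X_pow, single_eq_same, if_pos rfl, Nat.choose_self, Nat.sub_self,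
    pow_zero, Nat.cast_one, one_mul]

theorem eq_of_coeff_prod_blowupChart_pow_ne_zero (hij : i ≠ j) {α α' : σ →₀ ℕ}
    (h : coeff (α + single j (α i)) (∏ k, blowupChart i j a k ^ α' k) ≠ 0)
    (hj : α j ≤ α' j) : α' = α := by
  rw [prod_blowupChart_pow, coeff_monomial_mul] at h
  split_ifs at h with hle
  · rw [one_mul, coeff_C_add_X_pow] at h
    split_ifs at h with hδ
    · have hi : α i ≤ α' i := by
        by_contra hlt
        refine h ?_
        rw [Nat.choose_eq_zero_of_lt (by simpa [single_apply, hij.symm] using hlt), Nat.cast_zero,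
          zero_mul]
      have hsum : α' j + α' i ≤ α j + α i := by simpa [single_apply, hij.symm] using hle j
      have hother : ∀ k, k ≠ i → k ≠ j → α' k = α k := fun k hki hkj => by
        have hlek : α' k ≤ α k := by
          simpa only [coe_add, Pi.add_apply, erase_ne hki, single_eq_of_ne hkj, add_zero]
            using hle k
        have hδk : α k - α' k = 0 := by
          simpa only [coe_tsub, coe_add, Pi.sub_apply, Pi.add_apply, erase_ne hki,
            single_eq_of_ne hkj, single_eq_of_ne hki, add_zero] using DFunLike.congr_fun hδ k
        omega
      ext k
      rcases eq_or_ne k i with rfl | hki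
      · omega
      rcases eq_or_ne k j with rfl | hkj
      · omega
      exact hother k hki hkj
    · exact absurd rfl h
  · exact absurd rfl h

end BlowupChart

theorem IsSubstitutionBy.coeff_apply_eq_sum {m : ℕ} {s : Fin m → MvPowerSeries (Fin m) ℝ}
    {φ : MvPowerSeries (Fin m) ℝ →ₐ[ℝ] MvPowerSeries (Fin m) ℝ} (hφ : IsSubstitutionBy s φ)
    (F : MvPowerSeries (Fin m) ℝ) (β : Fin m →₀ ℕ) (A : Finset (Fin m →₀ ℕ))
    (hA : ∀ α : Fin m →₀ ℕ, ∑ k, α k ≤ ∑ k, β k → α ∈ A) :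
    coeff β (φ F) = ∑ α ∈ A, coeff α F * coeff β (∏ k, s k ^ α k) := by
  set P := ∑ α ∈ A, monomial α (coeff α F)
  have hP : ∀ α : Fin m →₀ ℕ, ∑ k, α k < ∑ k, β k + 1 → coeff α (F - P) = 0 := by
    intro α hα
    simp_rw [P, map_sub, map_sum, coeff_monomial]
    rw [Finset.sum_ite_eq, if_pos (hA α (Nat.lt_succ_iff.mp hα)), sub_self]
  have hφP : φ P = ∑ α ∈ A, coeff α F • ∏ k, s k ^ α k := by
    refine (map_sum _ _ _).trans (Finset.sum_congr rfl fun α _ => ?_)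
    rw [← mul_one (coeff α F), ← smul_eq_mul, map_smul, map_smul, ← prod_X_pow_eq_monomial_s2,
      map_prod]
    simp_rw [map_pow, hφ.1, smul_eq_mul, mul_one]
  have hPβ := hφ.2 (F - P) _ hP β (Nat.lt_succ_self _)
  rw [map_sub, map_sub, sub_eq_zero] at hPβ
  rw [hPβ, hφP, map_sum]
  simp_rw [coeff_smul]

theorem blowup_subst_injective_general (m : ℕ) (i j : Fin m) (hij : i ≠ j)
    (lam : ℝ) (φ : MvPowerSeries (Fin m) ℝ →ₐ[ℝ] MvPowerSeries (Fin m) ℝ)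
    (hφ : IsSubstitutionBy
      (fun k => if k = i then
          MvPowerSeries.X j * (MvPowerSeries.C (σ := Fin m) (R := ℝ) lam + MvPowerSeries.X i)
        else MvPowerSeries.X k) φ) :
    Function.Injective φ := by
  replace hφ : IsSubstitutionBy (blowupChart i j lam) φ := hφ
  refine (injective_iff_map_eq_zero φ).2 fun F hF => ?_
  by_contra hF0
  obtain ⟨α, hα, hmin⟩ := (measure fun α : Fin m →₀ ℕ => α j).wf.has_min {α | coeff α F ≠ 0}
    ((ne_zero_iff_exists_coeff_ne_zero F).1 hF0)
  set β := α + single j (α i)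
  set A := (finite_of_degree_le (σ := Fin m) (∑ k, β k)).toFinset
  have hA : ∀ α' : Fin m →₀ ℕ, ∑ k, α' k ≤ ∑ k, β k → α' ∈ A := fun α' h => by
    simpa [A, degree_eq_sum] using h
  have hβ := hφ.coeff_apply_eq_sum F β A hA
  rw [hF, map_zero, Finset.sum_eq_single α, coeff_prod_blowupChart_pow_self, mul_one] at hβ
  · exact hα hβ.symm
  · intro α' _ hne
    by_contra hne0
    exact hne (eq_of_coeff_prod_blowupChart_pow_ne_zero i j lam hij (right_ne_zero_of_mul hne0)
      (not_lt.mp (hmin α' (left_ne_zero_of_mul hne0))))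
  · exact fun hαA => absurd (hA α (Finset.sum_le_sum fun k _ => le_self_add)) hαA

/-- The blow-up chart `π_{i,j}^λ` (`X_i ↦ X_j·(λ + X_i)`, `X_k ↦ X_k` for `k ≠ i`)
acts injectively on `ℝ⟦X₁, …, X_m⟧`. -/
theorem blowup_subst_injective (m : ℕ) (hm : 2 ≤ m) (i j : Fin m) (hij : i ≠ j)
    (lam : ℝ) (φ : MvPowerSeries (Fin m) ℝ →ₐ[ℝ] MvPowerSeries (Fin m) ℝ)
    (hφ : IsSubstitutionBy
      (fun k => if k = i then
          MvPowerSeries.X j * (MvPowerSeries.C (σ := Fin m) (R := ℝ) lam + MvPowerSeries.X i)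
        else MvPowerSeries.X k) φ) :
    Function.Injective φ :=
  blowup_subst_injective_general m i j hij lam φ hφ
end

section
/- Let n, k ≥ 0 with n + k ≥ 1 and let M ⊆ ℝ^{n+k} be a d-dimensional C¹ submanifold such that the projection Π_n : ℝ^{n+k} → ℝⁿ onto the first n coordinates, restricted to M, has constant rank l (i.e. for every z ∈ M the restriction of Π_n to the tangent space T_zM of M at z has rank l). Then for every y ∈ Π_n(M), the fiber M_y = {z ∈ ℝ^k : (y, z) ∈ M} is a (d − l)-dimensional C¹ submanifold of ℝ^k. -/
/-- `M ⊆ ℝ^N` is a `d`-dimensional C¹ submanifold: every point of `M` has an open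
neighborhood on which `M` can be straightened to `ℝ^d × {0}` by a C¹ diffeomorphism. -/
def IsC1Submanifold (N d : ℕ) (M : Set (Fin N → ℝ)) : Prop :=
  ∀ x ∈ M, ∃ (U V : Set (Fin N → ℝ)) (φ ψ : (Fin N → ℝ) → (Fin N → ℝ)),
    IsOpen U ∧ IsOpen V ∧ x ∈ U ∧
    ContDiffOn ℝ 1 φ U ∧ ContDiffOn ℝ 1 ψ V ∧
    (∀ y ∈ U, φ y ∈ V) ∧ (∀ y ∈ V, ψ y ∈ U) ∧
    (∀ y ∈ U, ψ (φ y) = y) ∧ (∀ y ∈ V, φ (ψ y) = y) ∧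
    φ '' (U ∩ M) = V ∩ {y | ∀ i : Fin N, d ≤ (i : ℕ) → y i = 0}

/-- The tangent space of `M ⊆ ℝ^N` at `z`: the span of all velocity vectors at `z`
of C¹ curves through `z` staying in `M` near time `0`. -/
def tangentSpaceAt (N : ℕ) (M : Set (Fin N → ℝ)) (z : Fin N → ℝ) :
    Submodule ℝ (Fin N → ℝ) :=
  Submodule.span ℝ {v | ∃ γ : ℝ → (Fin N → ℝ),
    γ 0 = z ∧ (∀ᶠ t in nhds (0 : ℝ), γ t ∈ M) ∧ HasDerivAt γ v 0}

/-- The projection `Π_n : ℝ^{n+k} → ℝⁿ` onto the first `n` coordinates, as a linear map. -/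
noncomputable def projFst (n k : ℕ) : (Fin (n + k) → ℝ) →ₗ[ℝ] (Fin n → ℝ) :=
  LinearMap.funLeft ℝ ℝ (Fin.castAdd k)

/-!
Near a point `x₀ = (y, z₀)` of `M`, a chart straightening `M` yields a C¹ parametrization `g` of
`M` by an open set of `ℝ^{min d (n+k)}`, and the tangent space of `M` at `g c` is the range of
the differential of `g` at `c`. The hypothesis thus says that `f = Π_n ∘ g` has constant rank
`l`.

By the constant rank theorem its level set through `g⁻¹ x₀` is then parametrized by a C¹
immersion `Γ` of `ℝ^m`, `m = min d (n+k) - l`: choosing linear maps `A`, `B` injective on the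
kernel, resp. the range, of the differential at `c₀ = g⁻¹ x₀`, the map
`c ↦ (A (c - c₀), B (f c - f c₀))` is a local diffeomorphism, and on the slice where its second
component vanishes `f` is constant, since `B` stays injective on the ranges of nearby
differentials (lower semicontinuity of the rank).

Hence `M_y` is, near `z₀`, the image of the immersion `γ = (last k coordinates) ∘ g ∘ Γ`, with a
continuous local inverse on `M_y`. Completing the differential of `γ` by a linear complement `ν`,
the inverse function theorem makes `(u, v) ↦ γ u + ν v` a local C¹ diffeomorphism taking
`ℝ^m × 0` onto `M_y`.
-/

open Set Filter Topology Module Function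

variable {E F G : Type*} [NormedAddCommGroup E] [NormedSpace ℝ E]
  [NormedAddCommGroup F] [NormedSpace ℝ F] [NormedAddCommGroup G] [NormedSpace ℝ G]

namespace OpenPartialHomeomorph

def IsC1 (e : OpenPartialHomeomorph E F) : Prop :=
  ContDiffOn ℝ 1 e e.source ∧ ContDiffOn ℝ 1 e.symm e.target

variable {e : OpenPartialHomeomorph E F}

theorem IsC1.symm (he : e.IsC1) : e.symm.IsC1 :=
  ⟨he.2, he.1⟩

theorem IsC1.restrOpen (he : e.IsC1) {s : Set E} (hs : IsOpen s) : (e.restrOpen s hs).IsC1 :=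
  ⟨he.1.mono inter_subset_left, he.2.mono inter_subset_left⟩

theorem IsC1.transHomeomorph (he : e.IsC1) (s : F ≃L[ℝ] G) :
    (e.transHomeomorph s.toHomeomorph).IsC1 :=
  ⟨s.contDiff.comp_contDiffOn he.1, he.2.comp s.symm.contDiff.contDiffOn fun _ hy => hy⟩

theorem IsC1.contDiffAt (he : e.IsC1) {x : E} (hx : x ∈ e.source) : ContDiffAt ℝ 1 e x :=
  he.1.contDiffAt (e.open_source.mem_nhds hx)

theorem IsC1.differentiableAt (he : e.IsC1) {x : E} (hx : x ∈ e.source) :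
    DifferentiableAt ℝ e x :=
  (he.contDiffAt hx).differentiableAt one_ne_zero

theorem IsC1.fderiv_symm_comp_fderiv (he : e.IsC1) {x : E} (hx : x ∈ e.source) :
    (fderiv ℝ e.symm (e x)).comp (fderiv ℝ e x) = ContinuousLinearMap.id ℝ E := by
  have hsymm : DifferentiableAt ℝ e.symm (e x) := he.symm.differentiableAt (e.map_source hx)
  rw [← fderiv_comp x hsymm (he.differentiableAt hx), ← fderiv_id (x := x)]
  exact EventuallyEq.fderiv_eq (e.eventually_left_inverse hx : e.symm ∘ e =ᶠ[𝓝 x] id)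

theorem IsImage.transHomeomorph {X Y Z : Type*} [TopologicalSpace X] [TopologicalSpace Y]
    [TopologicalSpace Z] {e : OpenPartialHomeomorph X Y} {S : Set X} {T : Set Y}
    (h : e.IsImage S T) (s : Y ≃ₜ Z) :
    (e.transHomeomorph s).IsImage S (s.symm ⁻¹' T) := fun x hx => by
  simpa using h hx

/-- The inverse function theorem, shrunk to a domain on which both directions are C¹. -/
theorem exists_isC1_of_hasFDerivAt [CompleteSpace E] {f : E → F} {f' : E ≃L[ℝ] F} {a : E}
    (hf : ContDiffAt ℝ 1 f a) (hf' : HasFDerivAt f (f' : E →L[ℝ] F) a) :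
    ∃ e : OpenPartialHomeomorph E F, e.IsC1 ∧ a ∈ e.source ∧ ⇑e = f := by
  set e₀ := hf.toOpenPartialHomeomorph f hf' one_ne_zero
  obtain ⟨t, ht, hft⟩ := hf.contDiffOn le_rfl (by simp)
  obtain ⟨s, hs, hgs⟩ := (hf.to_localInverse hf' one_ne_zero).contDiffOn le_rfl (by simp)
  have hO : IsOpen (interior t ∩ (e₀.source ∩ e₀ ⁻¹' interior s)) :=
    isOpen_interior.inter (e₀.isOpen_inter_preimage isOpen_interior)
  have ha := hf.mem_toOpenPartialHomeomorph_source hf' one_ne_zero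
  refine ⟨e₀.restrOpen _ hO, ⟨hft.mono fun x hx => interior_subset hx.2.1, hgs.mono ?_⟩,
    ⟨ha, mem_interior_iff_mem_nhds.2 ht, ha, mem_interior_iff_mem_nhds.2 hs⟩, rfl⟩
  rintro b ⟨hb, -, -, hbs⟩
  rw [mem_preimage, e₀.right_inv hb] at hbs
  exact interior_subset hbs

section Slice

variable {X Y Z : Type*} [TopologicalSpace X] [TopologicalSpace Y] [TopologicalSpace Z] [Zero Z]
  {e : OpenPartialHomeomorph X (Y × Z)} {x : X}

theorem symm_mk_fst (hx : x ∈ e.source) (h : (e x).2 = 0) : e.symm ((e x).1, 0) = x := by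
  rw [← h, Prod.mk.eta, e.left_inv hx]

theorem eventually_mk_zero_mem_target (hx : x ∈ e.source) (h : (e x).2 = 0) :
    ∀ᶠ u in 𝓝 (e x).1, (u, (0 : Z)) ∈ e.target :=
  (continuous_id.prodMk continuous_const).continuousAt.eventually_mem (by
    show e.target ∈ 𝓝 ((e x).1, 0)
    rw [← h]
    exact e.open_target.mem_nhds (e.map_source hx))

end Slice

theorem IsC1.hasFDerivAt_symm_mk_zero {e : OpenPartialHomeomorph F (E × G)} (he : e.IsC1)
    {u : E} (hu : (u, 0) ∈ e.target) :
    HasFDerivAt (fun u => e.symm (u, (0 : G)))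
      ((fderiv ℝ e.symm (u, 0)).comp (ContinuousLinearMap.inl ℝ E G)) u :=
  (he.symm.differentiableAt hu).hasFDerivAt.comp u (ContinuousLinearMap.inl ℝ E G).hasFDerivAt

theorem IsC1.exists_isImage_of_eventually_iff (he : e.IsC1) {a : E} (ha : a ∈ e.source)
    {S : Set F} {P : Set E} (hSP : ∀ᶠ w in 𝓝 a, e w ∈ S ↔ w ∈ P) :
    ∃ e' : OpenPartialHomeomorph F E, e'.IsC1 ∧ e a ∈ e'.source ∧ e'.IsImage S P := by
  obtain ⟨O, hO, hOopen, haO⟩ := eventually_nhds_iff.1 hSP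
  exact ⟨(e.restrOpen O hOopen).symm, (he.restrOpen hOopen).symm,
    (e.restrOpen O hOopen).map_source ⟨ha, haO⟩, IsImage.symm fun w hw => hO w hw.2⟩

end OpenPartialHomeomorph

def coordPlane (N d : ℕ) : Submodule ℝ (Fin N → ℝ) where
  carrier := {x | ∀ i : Fin N, d ≤ (i : ℕ) → x i = 0}
  add_mem' hx hy i hi := by simp [hx i hi, hy i hi]
  zero_mem' _ _ := rfl
  smul_mem' c x hx i hi := by simp [hx i hi]

theorem isC1Submanifold_iff {N d : ℕ} {M : Set (Fin N → ℝ)} :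
    IsC1Submanifold N d M ↔ ∀ x ∈ M, ∃ e : OpenPartialHomeomorph (Fin N → ℝ) (Fin N → ℝ),
      e.IsC1 ∧ x ∈ e.source ∧ e.IsImage M (coordPlane N d) := by
  refine forall₂_congr fun x _ => ⟨?_, ?_⟩
  · rintro ⟨U, V, φ, ψ, hU, hV, hxU, hφ, hψ, hφU, hψV, hψφ, hφψ, himage⟩
    let e : OpenPartialHomeomorph (Fin N → ℝ) (Fin N → ℝ) :=
      { toFun := φ, invFun := ψ, source := U, target := V, map_source' := hφU,
        map_target' := hψV, left_inv' := hψφ, right_inv' := hφψ, open_source := hU,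
        open_target := hV, continuousOn_toFun := hφ.continuousOn,
        continuousOn_invFun := hψ.continuousOn }
    exact ⟨e, ⟨hφ, hψ⟩, hxU, .of_image_eq himage⟩
  · rintro ⟨e, ⟨hφ, hψ⟩, hx, himage⟩
    exact ⟨e.source, e.target, e, e.symm, e.open_source, e.open_target, hx, hφ, hψ,
      fun _ => e.map_source, fun _ => e.map_target, fun _ => e.left_inv, fun _ => e.right_inv,
      himage.image_eq⟩

/-- Splits off the first `m` coordinates. -/
noncomputable def coordSplit (N m : ℕ) (h : m ≤ N) :
    (Fin N → ℝ) ≃L[ℝ] (Fin m → ℝ) × (Fin (N - m) → ℝ) :=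
  ((LinearEquiv.funCongrLeft ℝ ℝ (finCongr (Nat.add_sub_of_le h))).trans
    ((LinearEquiv.funCongrLeft ℝ ℝ finSumFinEquiv).trans
      (LinearEquiv.sumArrowLequivProdArrow _ _ ℝ ℝ))).toContinuousLinearEquiv

theorem preimage_coordSplit {N m d : ℕ} (h : m ≤ N) (hd : min d N = m) :
    coordSplit N m h ⁻¹' {p | p.2 = 0} = coordPlane N d := by
  ext w
  simp only [mem_preimage, mem_ofPred_eq, funext_iff, coordSplit,
    LinearEquiv.coe_toContinuousLinearEquiv', LinearEquiv.trans_apply,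
    LinearEquiv.sumArrowLequivProdArrow_apply_snd, LinearEquiv.funCongrLeft_apply,
    LinearMap.funLeft_apply, finSumFinEquiv_apply_right, finCongr_apply,
    Pi.zero_apply]
  constructor
  · intro hw i hi
    convert hw ⟨i - m, by omega⟩ using 2
    ext
    simp only [Fin.val_cast, Fin.val_natAdd]
    omega
  · intro hw j
    exact hw _ (by simp only [Fin.val_cast, Fin.val_natAdd]; omega)

theorem IsC1Submanifold.exists_isImage_prod {N d : ℕ} {M : Set (Fin N → ℝ)}
    (hM : IsC1Submanifold N d M) {x : Fin N → ℝ} (hx : x ∈ M) :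
    ∃ e : OpenPartialHomeomorph (Fin N → ℝ) ((Fin (min d N) → ℝ) × (Fin (N - min d N) → ℝ)),
      e.IsC1 ∧ x ∈ e.source ∧ e.IsImage M {p | p.2 = 0} := by
  obtain ⟨e, he, hxe, hMe⟩ := isC1Submanifold_iff.1 hM x hx
  set s := coordSplit N (min d N) (min_le_right d N)
  refine ⟨e.transHomeomorph s.toHomeomorph, he.transHomeomorph s, hxe, ?_⟩
  have := hMe.transHomeomorph s.toHomeomorph
  rw [← preimage_coordSplit (min_le_right d N) rfl] at this
  convert this using 1
  ext p
  simp [s]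

theorem HasDerivAt.mem_of_eventually_mem [FiniteDimensional ℝ F] {P : Submodule ℝ F}
    {γ : ℝ → F} {v : F} {t : ℝ} (hγ : HasDerivAt γ v t) (hP : ∀ᶠ s in 𝓝 t, γ s ∈ P) : v ∈ P := by
  refine P.closed_of_finiteDimensional.mem_of_tendsto (hasDerivAt_iff_tendsto_slope.1 hγ) ?_
  filter_upwards [eventually_nhdsWithin_of_eventually_nhds hP] with s hs
  rw [slope_def_module]
  exact P.smul_mem _ (P.sub_mem hs hP.self_of_nhds)

theorem tangentSpaceAt_eq_map [FiniteDimensional ℝ F] {N : ℕ} {M : Set (Fin N → ℝ)}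
    {e : OpenPartialHomeomorph (Fin N → ℝ) F} {P : Submodule ℝ F} (he : e.IsC1)
    (hM : e.IsImage M P) {x : Fin N → ℝ} (hx : x ∈ e.source) (hxM : x ∈ M) :
    tangentSpaceAt N M x = P.map (fderiv ℝ e.symm (e x) : F →ₗ[ℝ] Fin N → ℝ) := by
  apply le_antisymm
  · refine Submodule.span_le.2 ?_
    rintro v ⟨γ, rfl, hγM, hγ⟩
    have hP : ∀ᶠ t in 𝓝 (0 : ℝ), e (γ t) ∈ P := by
      filter_upwards [hγM, hγ.continuousAt.eventually_mem (e.open_source.mem_nhds hx)]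
        with t htM hts
      exact (hM hts).2 htM
    refine ⟨fderiv ℝ e (γ 0) v,
      ((he.differentiableAt hx).hasFDerivAt.comp_hasDerivAt 0 hγ).mem_of_eventually_mem hP, ?_⟩
    simpa using congr($(he.fderiv_symm_comp_fderiv hx) v)
  · rintro _ ⟨w, hw, rfl⟩
    have hline : HasDerivAt (fun t : ℝ => e x + t • w) w 0 := by
      simpa using ((hasDerivAt_id (0 : ℝ)).smul_const w).const_add (e x)
    have htarget : ∀ᶠ t in 𝓝 (0 : ℝ), e x + t • w ∈ e.target :=
      hline.continuousAt.eventually_mem (by simpa using e.open_target.mem_nhds (e.map_source hx))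
    refine Submodule.subset_span ⟨fun t => e.symm (e x + t • w), by simp [e.left_inv hx], ?_, ?_⟩
    · filter_upwards [htarget] with t ht
      exact (hM.symm_apply_mem_iff ht).2 (P.add_mem ((hM hx).2 hxM) (P.smul_mem t hw))
    · exact (he.symm.differentiableAt (e.map_source hx)).hasFDerivAt.comp_hasDerivAt_of_eq 0 hline
        (by simp)

theorem tangentSpaceAt_symm_mk_zero [FiniteDimensional ℝ E] [FiniteDimensional ℝ G] {N : ℕ}
    {M : Set (Fin N → ℝ)} {e : OpenPartialHomeomorph (Fin N → ℝ) (E × G)} (he : e.IsC1)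
    (hM : e.IsImage M {p | p.2 = 0}) {c : E} (hc : (c, 0) ∈ e.target) :
    tangentSpaceAt N M (e.symm (c, 0)) =
      LinearMap.range (fderiv ℝ (fun u => e.symm (u, (0 : G))) c : E →ₗ[ℝ] Fin N → ℝ) := by
  rw [(he.hasFDerivAt_symm_mk_zero hc).fderiv,
    tangentSpaceAt_eq_map he (P := LinearMap.ker (LinearMap.snd ℝ E G)) hM (e.map_target hc)
      ((hM.symm_apply_mem_iff hc).2 rfl),
    e.right_inv hc, ContinuousLinearMap.toLinearMap_comp, LinearMap.range_comp,
    ← LinearMap.range_inl]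
  rfl

theorem range_fderiv_comp_symm_mk_zero [FiniteDimensional ℝ E] [FiniteDimensional ℝ G]
    {H : Type*} [NormedAddCommGroup H] [NormedSpace ℝ H] {N : ℕ} {M : Set (Fin N → ℝ)}
    {e : OpenPartialHomeomorph (Fin N → ℝ) (E × G)} (he : e.IsC1)
    (hM : e.IsImage M {p | p.2 = 0}) (P : (Fin N → ℝ) →L[ℝ] H) {c : E}
    (hc : (c, 0) ∈ e.target) :
    LinearMap.range (fderiv ℝ (P ∘ fun u => e.symm (u, (0 : G))) c : E →ₗ[ℝ] H) =
      (tangentSpaceAt N M (e.symm (c, 0))).map (P : (Fin N → ℝ) →ₗ[ℝ] H) := by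
  rw [tangentSpaceAt_symm_mk_zero he hM hc,
    (P.hasFDerivAt.comp c (he.hasFDerivAt_symm_mk_zero hc).differentiableAt.hasFDerivAt).fderiv,
    ContinuousLinearMap.toLinearMap_comp, LinearMap.range_comp]

/-- `γ` is a C¹ immersion at `a` which, near `γ a`, maps a neighbourhood of `a` onto `S`, with a
local inverse `σ` on `S` that is continuous at `γ a`. -/
structure IsLocalParametrization (S : Set F) (γ : E → F) (σ : F → E) (a : E) : Prop where
  contDiffAt : ContDiffAt ℝ 1 γ a
  injective_fderiv : Injective (fderiv ℝ γ a)
  eventually_mem : ∀ᶠ u in 𝓝 a, γ u ∈ S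
  tendsto_retract : Tendsto σ (𝓝 (γ a)) (𝓝 a)
  eventually_retract : ∀ᶠ z in 𝓝 (γ a), z ∈ S → γ (σ z) = z

theorem OpenPartialHomeomorph.IsC1.isLocalParametrization
    {e : OpenPartialHomeomorph F (E × G)} (he : e.IsC1) {S : Set F} {x₀ : F}
    (hx₀ : x₀ ∈ e.source) (hx₀S : x₀ ∈ S)
    (hS : ∀ᶠ x in 𝓝 x₀, x ∈ S → (e x).2 = 0) (hSγ : ∀ᶠ u in 𝓝 (e x₀).1, e.symm (u, 0) ∈ S) :
    IsLocalParametrization S (fun u => e.symm (u, 0)) (fun x => (e x).1) (e x₀).1 := by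
  have h₀ : (e x₀).2 = 0 := hS.self_of_nhds hx₀S
  have htarget := (e.eventually_mk_zero_mem_target hx₀ h₀).self_of_nhds
  have hsymm : ContDiffAt ℝ 1 e.symm ((e x₀).1, 0) := he.symm.contDiffAt htarget
  refine ⟨hsymm.comp (e x₀).1 (contDiff_id.prodMk contDiff_const).contDiffAt, ?_, hSγ, ?_, ?_⟩
  · rw [(he.hasFDerivAt_symm_mk_zero htarget).fderiv, ContinuousLinearMap.coe_comp]
    refine Injective.comp ?_ fun u v h => by simpa using congr_arg Prod.fst h
    have hinv := he.symm.fderiv_symm_comp_fderiv htarget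
    exact LeftInverse.injective fun v => congr($hinv v)
  · rw [e.symm_mk_fst hx₀ h₀]
    exact continuous_fst.continuousAt.comp (he.contDiffAt hx₀).continuousAt
  · rw [e.symm_mk_fst hx₀ h₀]
    filter_upwards [hS, e.open_source.mem_nhds hx₀] with x hxS hx hxM
    exact e.symm_mk_fst hx (hxS hxM)

theorem OpenPartialHomeomorph.IsC1.isLocalParametrization_of_isImage
    {e : OpenPartialHomeomorph F (E × G)} (he : e.IsC1) {S : Set F}
    (hS : e.IsImage S {p | p.2 = 0}) {x₀ : F} (hx₀ : x₀ ∈ e.source)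
    (hx₀S : x₀ ∈ S) :
    IsLocalParametrization S (fun u => e.symm (u, 0)) (fun x => (e x).1) (e x₀).1 := by
  refine he.isLocalParametrization hx₀ hx₀S ?_ ?_
  · filter_upwards [e.open_source.mem_nhds hx₀] with x hx using (hS hx).2
  · filter_upwards [e.eventually_mk_zero_mem_target hx₀ ((hS hx₀).2 hx₀S)] with u hu
    exact (hS.symm_apply_mem_iff hu).2 rfl

theorem IsLocalParametrization.finrank_le [FiniteDimensional ℝ F] {S : Set F} {γ : E → F}
    {σ : F → E} {a : E} (hγ : IsLocalParametrization S γ σ a) : finrank ℝ E ≤ finrank ℝ F :=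
  LinearMap.finrank_le_finrank_of_injective hγ.injective_fderiv

theorem ContinuousLinearMap.exists_bijective_coprod [FiniteDimensional ℝ E]
    [FiniteDimensional ℝ F] {m k : ℕ} (hE : finrank ℝ E = m) (hF : finrank ℝ F = k)
    {L : E →L[ℝ] F} (hL : Injective L) :
    ∃ ν : (Fin (k - m) → ℝ) →L[ℝ] F, Bijective (L.coprod ν) := by
  obtain ⟨Q, hQ⟩ := (LinearMap.range (L : E →ₗ[ℝ] F)).exists_isCompl
  have hmk : m ≤ k := hE ▸ hF ▸ LinearMap.finrank_le_finrank_of_injective hL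
  have hQdim : finrank ℝ (Fin (k - m) → ℝ) = finrank ℝ Q := by
    have := Submodule.finrank_add_eq_of_isCompl hQ
    rw [LinearMap.finrank_range_of_inj hL] at this
    simp only [finrank_fin_fun]
    omega
  let φ := LinearEquiv.ofFinrankEq _ _ hQdim
  let ν := (Q.subtype ∘ₗ (φ : (Fin (k - m) → ℝ) →ₗ[ℝ] Q)).toContinuousLinearMap
  have hinj : Injective (L.coprod ν) := by
    refine (injective_iff_map_eq_zero _).2 fun ⟨u, v⟩ h => ?_
    change L u + (φ v : F) = 0 at h
    have hLu : L u = 0 := Submodule.disjoint_def.1 hQ.disjoint _ (LinearMap.mem_range_self _ u)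
      (by rw [eq_neg_of_add_eq_zero_left h]; exact Q.neg_mem (φ v).2)
    rw [hLu, zero_add, ZeroMemClass.coe_eq_zero, LinearEquiv.map_eq_zero_iff] at h
    rw [hL (hLu.trans L.map_zero.symm), h, Prod.mk_zero_zero]
  refine ⟨ν, hinj, ?_⟩
  refine (LinearMap.injective_iff_surjective_of_finrank_eq_finrank ?_).1 hinj
  simp only [finrank_prod, finrank_fin_fun, hE, hF]
  omega

theorem IsLocalParametrization.exists_isImage_coordPlane {k m d : ℕ} {S : Set (Fin k → ℝ)}
    {γ : (Fin m → ℝ) → Fin k → ℝ} {σ : (Fin k → ℝ) → Fin m → ℝ}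
    (hγ : IsLocalParametrization S γ σ 0) (hd : min d k = m) :
    ∃ e : OpenPartialHomeomorph (Fin k → ℝ) (Fin k → ℝ),
      e.IsC1 ∧ γ 0 ∈ e.source ∧ e.IsImage S (coordPlane k d) := by
  have hmk : m ≤ k := by simpa using hγ.finrank_le
  obtain ⟨ν, hν⟩ := (fderiv ℝ γ 0).exists_bijective_coprod (finrank_fin_fun ℝ) (finrank_fin_fun ℝ)
    hγ.injective_fderiv
  set Θ : (Fin m → ℝ) × (Fin (k - m) → ℝ) → Fin k → ℝ := fun p => γ p.1 + ν p.2
  have hΘ0 : Θ 0 = γ 0 := by simp [Θ]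
  have hΘc : ContDiffAt ℝ 1 Θ 0 :=
    (hγ.contDiffAt.comp 0 contDiffAt_fst).add (ν.contDiff.comp contDiff_snd).contDiffAt
  let L : ((Fin m → ℝ) × (Fin (k - m) → ℝ)) ≃L[ℝ] (Fin k → ℝ) :=
    (LinearEquiv.ofBijective ((fderiv ℝ γ 0).coprod ν : _ →ₗ[ℝ] Fin k → ℝ) hν
      ).toContinuousLinearEquiv
  have hΘd : HasFDerivAt Θ (L : _ →L[ℝ] Fin k → ℝ) 0 := by
    refine (((hγ.contDiffAt.differentiableAt one_ne_zero).hasFDerivAt.comp 0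
      hasFDerivAt_fst).add (ν.comp (ContinuousLinearMap.snd ℝ (Fin m → ℝ) _)).hasFDerivAt
      ).congr_fderiv ?_
    ext <;> simp [L]
  obtain ⟨e₀, he₀, h0, he₀Θ⟩ := OpenPartialHomeomorph.exists_isC1_of_hasFDerivAt hΘc hΘd
  have hΘt : Tendsto Θ (𝓝 0) (𝓝 (γ 0)) := hΘ0 ▸ hΘc.continuousAt.tendsto
  have hiff : ∀ᶠ p in 𝓝 0, Θ p ∈ S ↔ p ∈ {p | p.2 = 0} := by
    have hback : Tendsto (fun p => (σ (Θ p), (0 : Fin (k - m) → ℝ))) (𝓝 0) (𝓝 0) :=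
      (hγ.tendsto_retract.comp hΘt).prodMk_nhds tendsto_const_nhds
    filter_upwards [e₀.open_source.mem_nhds h0, hback.eventually (e₀.open_source.mem_nhds h0),
      hΘt.eventually hγ.eventually_retract,
      (continuous_fst.tendsto' 0 0 rfl).eventually hγ.eventually_mem] with p hp hq hret hmem
    refine ⟨fun hpS => ?_, fun hp2 => ?_⟩
    -- `Θ p = γ (σ (Θ p)) = Θ (σ (Θ p), 0)`, and `Θ` is injective near `0`.
    · exact (congr_arg Prod.snd (e₀.injOn hq hp (by rw [he₀Θ]; simp [Θ, hret hpS]))).symm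
    · simpa [Θ, show p.2 = 0 from hp2] using hmem
  rw [← he₀Θ] at hiff
  obtain ⟨e', he', h0', he'S⟩ := he₀.exists_isImage_of_eventually_iff h0 hiff
  refine ⟨e'.transHomeomorph (coordSplit k m hmk).symm.toHomeomorph,
    he'.transHomeomorph _, by simpa [he₀Θ, hΘ0] using h0', ?_⟩
  rw [← preimage_coordSplit hmk hd]
  exact he'S.transHomeomorph _

theorem Submodule.exists_disjoint_ker [FiniteDimensional ℝ E] (S : Submodule ℝ E) {m : ℕ}
    (hS : finrank ℝ S = m) :
    ∃ π : E →L[ℝ] (Fin m → ℝ), Disjoint S (LinearMap.ker (π : E →ₗ[ℝ] Fin m → ℝ)) := by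
  obtain ⟨C, hC⟩ := S.exists_isCompl
  let φ : S ≃ₗ[ℝ] (Fin m → ℝ) := LinearEquiv.ofFinrankEq _ _ (by simpa using hS)
  refine ⟨(φ.toLinearMap ∘ₗ S.projectionOnto C hC).toContinuousLinearMap,
    Submodule.disjoint_def.2 fun x hx hπx => ?_⟩
  change φ (S.projectionOnto C hC x) = 0 at hπx
  rwa [S.projectionOnto_apply_of_mem_left hC hx, LinearEquiv.map_eq_zero_iff,
    Submodule.mk_eq_zero] at hπx

theorem Submodule.disjoint_ker_of_finrank_le_finrank_map {p : Submodule ℝ E}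
    [FiniteDimensional ℝ p] {f : E →ₗ[ℝ] F} (h : finrank ℝ p ≤ finrank ℝ (p.map f)) :
    Disjoint p (LinearMap.ker f) := by
  rw [← LinearMap.injective_domRestrict_iff, ← LinearMap.ker_eq_bot, ← Submodule.finrank_eq_zero]
  have := (f.domRestrict p).finrank_range_add_finrank_ker
  rw [LinearMap.range_domRestrict] at this
  omega

/-- Lower semicontinuity of the rank. -/
theorem eventually_disjoint_range_ker [FiniteDimensional ℝ E] {X : Type*} [TopologicalSpace X]
    {T : X → E →L[ℝ] F} {x₀ : X} (hT : ContinuousAt T x₀) {π : F →L[ℝ] G}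
    (hrank : ∀ᶠ x in 𝓝 x₀, finrank ℝ (LinearMap.range (T x : E →ₗ[ℝ] F)) ≤
      finrank ℝ (LinearMap.range (T x₀ : E →ₗ[ℝ] F)))
    (h₀ : Disjoint (LinearMap.range (T x₀ : E →ₗ[ℝ] F)) (LinearMap.ker (π : F →ₗ[ℝ] G))) :
    ∀ᶠ x in 𝓝 x₀, Disjoint (LinearMap.range (T x : E →ₗ[ℝ] F)) (LinearMap.ker (π : F →ₗ[ℝ] G)) := by
  have hrank_comp (x : X) : LinearMap.rank (π.comp (T x) : E →ₗ[ℝ] G) =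
      finrank ℝ ((LinearMap.range (T x : E →ₗ[ℝ] F)).map (π : F →ₗ[ℝ] G)) := by
    rw [LinearMap.rank, ContinuousLinearMap.toLinearMap_comp, LinearMap.range_comp, finrank_eq_rank]
  have h₀' : finrank ℝ ((LinearMap.range (T x₀ : E →ₗ[ℝ] F)).map (π : F →ₗ[ℝ] G)) =
      finrank ℝ (LinearMap.range (T x₀ : E →ₗ[ℝ] F)) := by
    rw [← LinearMap.range_domRestrict]
    exact LinearMap.finrank_range_of_inj (LinearMap.injective_domRestrict_iff.2 h₀)
  have hopen := (isOpen_setOfPred_nat_le_rank (𝕜 := ℝ) (E := E) (F := G)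
    (finrank ℝ (LinearMap.range (T x₀ : E →ₗ[ℝ] F)))).mem_nhds (x := π.comp (T x₀)) (by
      rw [mem_ofPred_eq, hrank_comp, h₀'])
  have hcomp : ContinuousAt (fun x => π.comp (T x)) x₀ :=
    (ContinuousLinearMap.compL ℝ E F G π).continuous.continuousAt.comp hT
  filter_upwards [hrank, hcomp.eventually hopen] with x hx hx'
  refine Submodule.disjoint_ker_of_finrank_le_finrank_map ?_
  rw [hrank_comp, Nat.cast_le] at hx'
  omega

theorem eventually_eq_of_eventually_hasFDerivAt_zero {h : E → F} {a : E}
    (hd : ∀ᶠ u in 𝓝 a, HasFDerivAt h (0 : E →L[ℝ] F) u) : ∀ᶠ u in 𝓝 a, h u = h a := by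
  obtain ⟨s, hs, hsopen, has⟩ := eventually_nhds_iff.1 hd
  have := hsopen.isOpen_inter_preimage_of_fderiv_eq_zero
    (fun u hu => (hs u hu).differentiableAt.differentiableWithinAt) (fun u hu => (hs u hu).fderiv)
    {h a}
  filter_upwards [this.mem_nhds ⟨has, rfl⟩] with u hu using hu.2

theorem eventually_eq_of_eventually_comp_eq {h : E → F} {π : F →L[ℝ] G} {a : E}
    (hπ : ∀ᶠ u in 𝓝 a, π (h u) = π (h a))
    (hdisj : ∀ᶠ u in 𝓝 a, DifferentiableAt ℝ h u ∧
      Disjoint (LinearMap.range (fderiv ℝ h u : E →ₗ[ℝ] F)) (LinearMap.ker (π : F →ₗ[ℝ] G))) :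
    ∀ᶠ u in 𝓝 a, h u = h a := by
  refine eventually_eq_of_eventually_hasFDerivAt_zero ?_
  filter_upwards [hπ.eventually_nhds, hdisj] with u hu ⟨hdiff, hdisj⟩
  have hzero : π.comp (fderiv ℝ h u) = 0 := by
    rw [← (π.hasFDerivAt.comp u hdiff.hasFDerivAt).fderiv]
    exact (EventuallyEq.fderiv_eq hu).trans (fderiv_const_apply _)
  convert hdiff.hasFDerivAt
  ext1 v
  exact (Submodule.disjoint_def.1 hdisj _ (LinearMap.mem_range_self _ v) congr($hzero v)).symm

theorem exists_isC1_eq_prod_sub [FiniteDimensional ℝ E] {m l : ℕ} {f : E → F} {c₀ : E}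
    (hf : ContDiffAt ℝ 1 f c₀) (hdim : finrank ℝ E = m + l) {A : E →L[ℝ] (Fin m → ℝ)}
    {B : F →L[ℝ] (Fin l → ℝ)}
    (hA : Disjoint (LinearMap.ker (fderiv ℝ f c₀ : E →ₗ[ℝ] F))
      (LinearMap.ker (A : E →ₗ[ℝ] Fin m → ℝ)))
    (hB : Disjoint (LinearMap.range (fderiv ℝ f c₀ : E →ₗ[ℝ] F))
      (LinearMap.ker (B : F →ₗ[ℝ] Fin l → ℝ))) :
    ∃ e : OpenPartialHomeomorph E ((Fin m → ℝ) × (Fin l → ℝ)), e.IsC1 ∧ c₀ ∈ e.source ∧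
      ⇑e = fun c => (A (c - c₀), B (f c - f c₀)) := by
  set D := fderiv ℝ f c₀
  have hinj : Injective (A.prod (B.comp D)) := by
    refine (injective_iff_map_eq_zero _).2 fun v hv => ?_
    have hDv : D v = 0 := Submodule.disjoint_def.1 hB _ (LinearMap.mem_range_self _ v)
      (congr_arg Prod.snd hv)
    exact Submodule.disjoint_def.1 hA v hDv (congr_arg Prod.fst hv)
  have hbij : Bijective (A.prod (B.comp D)) := ⟨hinj,
    (LinearMap.injective_iff_surjective_of_finrank_eq_finrank (by simp [hdim])).1 hinj⟩
  refine OpenPartialHomeomorph.exists_isC1_of_hasFDerivAt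
    (f' := (LinearEquiv.ofBijective (A.prod (B.comp D) : E →ₗ[ℝ] _) hbij).toContinuousLinearEquiv)
    ((A.contDiff.comp (contDiff_id.sub contDiff_const)).contDiffAt.prodMk
      ((B.contDiff.contDiffAt.comp c₀ (hf.sub contDiffAt_const)))) ?_
  exact ((A.hasFDerivAt.comp c₀ ((hasFDerivAt_id c₀).sub_const c₀)).prodMk
    (B.hasFDerivAt.comp c₀ ((hf.differentiableAt one_ne_zero).hasFDerivAt.sub_const _)))

theorem OpenPartialHomeomorph.IsC1.eventually_apply_symm_eq {H : Type*} [NormedAddCommGroup H]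
    [NormedSpace ℝ H] {e : OpenPartialHomeomorph E (F × G)} (he : e.IsC1) {f : E → H}
    {B : H →L[ℝ] G} {c₀ : E} (hc₀ : c₀ ∈ e.source)
    (he_snd : ∀ c ∈ e.source, (e c).2 = B (f c - f c₀))
    (hf : ∀ᶠ c in 𝓝 c₀, DifferentiableAt ℝ f c ∧
      Disjoint (LinearMap.range (fderiv ℝ f c : E →ₗ[ℝ] H)) (LinearMap.ker (B : H →ₗ[ℝ] G))) :
    ∀ᶠ u in 𝓝 (e c₀).1, f (e.symm (u, 0)) = f c₀ := by
  have h₀ : (e c₀).2 = 0 := by simp [he_snd c₀ hc₀]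
  have hΓ₀ := e.symm_mk_fst hc₀ h₀
  have htarget := e.eventually_mk_zero_mem_target hc₀ h₀
  have hΓ : Tendsto (fun u => e.symm (u, (0 : G))) (𝓝 (e c₀).1) (𝓝 c₀) := by
    simpa only [ContinuousAt, hΓ₀] using
      (he.hasFDerivAt_symm_mk_zero htarget.self_of_nhds).continuousAt
  have := eventually_eq_of_eventually_comp_eq (h := fun u => f (e.symm (u, 0))) (π := B)
    (a := (e c₀).1) ?_ ?_
  · simpa only [hΓ₀] using this
  · filter_upwards [htarget] with u hu
    have := he_snd _ (e.map_target hu)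
    rw [e.right_inv hu, eq_comm, map_sub, sub_eq_zero] at this
    rw [hΓ₀, this]
  · filter_upwards [htarget, hΓ.eventually hf] with u hu ⟨hfd, hdisj⟩
    have hcomp : HasFDerivAt (fun u => f (e.symm (u, 0))) _ u :=
      hfd.hasFDerivAt.comp u (he.hasFDerivAt_symm_mk_zero hu)
    refine ⟨hcomp.differentiableAt, hdisj.mono_left ?_⟩
    rw [hcomp.fderiv, ContinuousLinearMap.toLinearMap_comp]
    exact LinearMap.range_comp_le_range _ _

/-- The constant rank theorem, for level sets. -/
theorem exists_isLocalParametrization_preimage_of_finrank_range_fderiv_eq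
    [FiniteDimensional ℝ E] [FiniteDimensional ℝ F] {f : E → F} {W : Set E} {c₀ : E} {l : ℕ}
    (hW : IsOpen W) (hc₀ : c₀ ∈ W) (hf : ContDiffOn ℝ 1 f W)
    (hrank : ∀ c ∈ W, finrank ℝ (LinearMap.range (fderiv ℝ f c : E →ₗ[ℝ] F)) = l) :
    ∃ (Γ : (Fin (finrank ℝ E - l) → ℝ) → E) (σ : E → Fin (finrank ℝ E - l) → ℝ), Γ 0 = c₀ ∧
      IsLocalParametrization (f ⁻¹' {f c₀}) Γ σ 0 := by
  set D := fderiv ℝ f c₀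
  have hrank_nullity := (D : E →ₗ[ℝ] F).finrank_range_add_finrank_ker
  rw [hrank c₀ hc₀] at hrank_nullity
  obtain ⟨A, hA⟩ := (LinearMap.ker (D : E →ₗ[ℝ] F)).exists_disjoint_ker (m := finrank ℝ E - l)
    (by omega)
  obtain ⟨B, hB⟩ := (LinearMap.range (D : E →ₗ[ℝ] F)).exists_disjoint_ker (hrank c₀ hc₀)
  obtain ⟨e, he, hc₀e, heq⟩ :=
    exists_isC1_eq_prod_sub (hf.contDiffAt (hW.mem_nhds hc₀)) (by omega) hA hB
  have he₀ : e c₀ = 0 := by simp [heq]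
  have hsnd : ∀ c, (e c).2 = B (f c - f c₀) := by simp [heq]
  have hdisj := eventually_disjoint_range_ker
    ((hf.continuousOn_fderiv_of_isOpen hW le_rfl).continuousAt (hW.mem_nhds hc₀))
    (by filter_upwards [hW.mem_nhds hc₀] with c hc; rw [hrank c hc, hrank c₀ hc₀]) hB
  have hconst := he.eventually_apply_symm_eq hc₀e (fun c _ => hsnd c) (by
    filter_upwards [hW.mem_nhds hc₀, hdisj] with c hc hcdisj
    exact ⟨(hf.differentiableOn one_ne_zero).differentiableAt (hW.mem_nhds hc), hcdisj⟩)
  have hparam := he.isLocalParametrization (S := f ⁻¹' {f c₀}) hc₀e rfl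
    (.of_forall fun c (hc : f c = f c₀) => by rw [hsnd, hc, sub_self, map_zero]) hconst
  rw [he₀, Prod.fst_zero] at hparam
  refine ⟨_, _, ?_, hparam⟩
  simpa [he₀] using e.symm_mk_fst hc₀e (by simp [he₀])

noncomputable def projSnd (n k : ℕ) : (Fin (n + k) → ℝ) →ₗ[ℝ] (Fin k → ℝ) :=
  LinearMap.funLeft ℝ ℝ (Fin.natAdd n)

section Append

variable {n k : ℕ}

@[simp]
theorem projFst_append (y : Fin n → ℝ) (z : Fin k → ℝ) : projFst n k (Fin.append y z) = y :=
  funext (Fin.append_left y z)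

@[simp]
theorem projSnd_append (y : Fin n → ℝ) (z : Fin k → ℝ) : projSnd n k (Fin.append y z) = z :=
  funext (Fin.append_right y z)

theorem append_projFst_projSnd (x : Fin (n + k) → ℝ) :
    Fin.append (projFst n k x) (projSnd n k x) = x :=
  Fin.append_castAdd_natAdd

theorem eq_zero_of_projFst_of_projSnd {x : Fin (n + k) → ℝ} (h₁ : projFst n k x = 0)
    (h₂ : projSnd n k x = 0) : x = 0 := by
  rw [← append_projFst_projSnd x, h₁, h₂, ← map_zero (projFst n k), ← map_zero (projSnd n k),
    append_projFst_projSnd]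

end Append

theorem injective_fderiv_projSnd_comp {n k : ℕ} {g : E → Fin (n + k) → ℝ} {Γ : F → E} {a : F}
    (hg : DifferentiableAt ℝ g (Γ a)) (hg' : Injective (fderiv ℝ g (Γ a)))
    (hΓ : DifferentiableAt ℝ Γ a) (hΓ' : Injective (fderiv ℝ Γ a))
    (hlevel : ∀ᶠ u in 𝓝 a, projFst n k (g (Γ u)) = projFst n k (g (Γ a))) :
    Injective (fderiv ℝ (projSnd n k ∘ g ∘ Γ) a) := by
  let P₁ := LinearMap.toContinuousLinearMap (projFst n k)
  let P₂ := LinearMap.toContinuousLinearMap (projSnd n k)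
  have hL := hg.hasFDerivAt.comp a hΓ.hasFDerivAt
  have hP₁ : P₁.comp ((fderiv ℝ g (Γ a)).comp (fderiv ℝ Γ a)) = 0 := by
    rw [← (P₁.hasFDerivAt.comp a hL).fderiv]
    exact (EventuallyEq.fderiv_eq (hlevel : P₁ ∘ (g ∘ Γ) =ᶠ[𝓝 a] fun _ => _)).trans
      (fderiv_const_apply _)
  have hP₂ : fderiv ℝ (projSnd n k ∘ g ∘ Γ) a =
      P₂.comp ((fderiv ℝ g (Γ a)).comp (fderiv ℝ Γ a)) :=
    (P₂.hasFDerivAt.comp a hL).fderiv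
  rw [hP₂]
  refine (injective_iff_map_eq_zero _).2 fun v hv => ?_
  have := eq_zero_of_projFst_of_projSnd congr($hP₁ v) hv
  exact (injective_iff_map_eq_zero _).1 hΓ' v ((injective_iff_map_eq_zero _).1 hg' _ this)

theorem IsLocalParametrization.fiber {n k m : ℕ} {M : Set (Fin (n + k) → ℝ)}
    {g : E → Fin (n + k) → ℝ} {ρ : (Fin (n + k) → ℝ) → E} {c₀ : E}
    (hg : IsLocalParametrization M g ρ c₀)
    {Γ : (Fin m → ℝ) → E} {σ : E → Fin m → ℝ} (hΓ₀ : Γ 0 = c₀)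
    (hΓ : IsLocalParametrization ((projFst n k ∘ g) ⁻¹' {projFst n k (g c₀)}) Γ σ 0) :
    IsLocalParametrization {z | Fin.append (projFst n k (g c₀)) z ∈ M} (projSnd n k ∘ g ∘ Γ)
      (σ ∘ ρ ∘ Fin.append (projFst n k (g c₀))) 0 := by
  set y := projFst n k (g c₀)
  subst hΓ₀
  have hΓt : Tendsto Γ (𝓝 0) (𝓝 (Γ 0)) := hΓ.contDiffAt.continuousAt
  have happend : Tendsto (Fin.append y) (𝓝 (projSnd n k (g (Γ 0)))) (𝓝 (g (Γ 0))) := by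
    have : Continuous (Fin.append y : (Fin k → ℝ) → _) := by fun_prop
    simpa [y, append_projFst_projSnd] using this.tendsto (projSnd n k (g (Γ 0)))
  refine ⟨(projSnd n k).toContinuousLinearMap.contDiff.contDiffAt.comp 0
    (hg.contDiffAt.comp 0 hΓ.contDiffAt), injective_fderiv_projSnd_comp
    (hg.contDiffAt.differentiableAt one_ne_zero) hg.injective_fderiv
    (hΓ.contDiffAt.differentiableAt one_ne_zero) hΓ.injective_fderiv hΓ.eventually_mem, ?_,
    hΓ.tendsto_retract.comp (hg.tendsto_retract.comp happend), ?_⟩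
  · filter_upwards [hΓ.eventually_mem, hΓt.eventually hg.eventually_mem] with u hu hgu
    simpa [← show projFst n k (g (Γ u)) = y from hu, append_projFst_projSnd] using hgu
  · filter_upwards [happend.eventually hg.eventually_retract,
      (hg.tendsto_retract.comp happend).eventually hΓ.eventually_retract] with z hz hz' hzM
    have hlevel : ρ (Fin.append y z) ∈ (projFst n k ∘ g) ⁻¹' {y} := by
      simp [hz hzM]
    show projSnd n k (g (Γ (σ (ρ (Fin.append y z))))) = z
    rw [show Γ (σ (ρ (Fin.append y z))) = ρ (Fin.append y z) from hz' hlevel, hz hzM,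
      projSnd_append]

theorem fiber_isC1Submanifold_general (n k d l : ℕ)
    (M : Set (Fin (n + k) → ℝ)) (hM : IsC1Submanifold (n + k) d M)
    (hrank : ∀ z ∈ M,
      Module.finrank ℝ ((tangentSpaceAt (n + k) M z).map (projFst n k)) = l) :
    ∀ y ∈ (projFst n k) '' M,
      IsC1Submanifold k (d - l) {z : Fin k → ℝ | Fin.append y z ∈ M} := by
  intro y _
  refine isC1Submanifold_iff.2 fun z₀ hz₀ => ?_
  obtain ⟨e, he, hx₀, hMe⟩ := hM.exists_isImage_prod hz₀
  have hx₀snd : (e (Fin.append y z₀)).2 = 0 := (hMe hx₀).2 hz₀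
  set P := (projFst n k).toContinuousLinearMap
  obtain ⟨Γ, σ, hΓ₀, hΓ⟩ := exists_isLocalParametrization_preimage_of_finrank_range_fderiv_eq
    (f := P ∘ fun c => e.symm (c, 0)) (e.open_target.preimage (by fun_prop))
    (e.eventually_mk_zero_mem_target hx₀ hx₀snd).self_of_nhds
    (P.contDiff.comp_contDiffOn (he.2.comp (by fun_prop) fun _ hc => hc)) fun c hc => by
      rw [range_fderiv_comp_symm_mk_zero he hMe P hc]
      exact hrank _ ((hMe.symm_apply_mem_iff hc).2 rfl)
  have hfib := (he.isLocalParametrization_of_isImage hMe hx₀ hz₀).fiber hΓ₀ hΓ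
  rw [e.symm_mk_fst hx₀ hx₀snd, projFst_append] at hfib
  have hmk := hfib.finrank_le
  have hln : l ≤ n := by
    simpa [hrank _ hz₀] using ((tangentSpaceAt _ M (Fin.append y z₀)).map (projFst n k)).finrank_le
  obtain ⟨e', he', hz₀e', himage⟩ := hfib.exists_isImage_coordPlane (d := d - l) (by
    simp only [finrank_fin_fun] at hmk ⊢
    omega)
  exact ⟨e', he', by simpa [hΓ₀, e.symm_mk_fst hx₀ hx₀snd] using hz₀e', himage⟩

/-- If `Π_n` restricted to the `d`-dimensional C¹ submanifold `M ⊆ ℝ^{n+k}` has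
constant rank `l`, then every fiber of `Π_n` over `Π_n(M)` is a `(d−l)`-dimensional
C¹ submanifold of `ℝ^k`. -/
theorem fiber_isC1Submanifold (n k d l : ℕ) (hnk : 1 ≤ n + k)
    (M : Set (Fin (n + k) → ℝ)) (hM : IsC1Submanifold (n + k) d M)
    (hrank : ∀ z ∈ M,
      Module.finrank ℝ ((tangentSpaceAt (n + k) M z).map (projFst n k)) = l) :
    ∀ y ∈ (projFst n k) '' M,
      IsC1Submanifold k (d - l) {z : Fin k → ℝ | Fin.append y z ∈ M} :=
  fiber_isC1Submanifold_general n k d l M hM hrank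
end

section
/- Let n ≥ 1, k ≥ 0 and let M ⊆ ℝ^{n+k} be a bounded d-dimensional C¹ submanifold such that the projection Π_n : ℝ^{n+k} → ℝⁿ onto the first n coordinates, restricted to M, has constant rank l with l < d. Assume there is a strictly increasing map ι : {1, …, d} → {1, …, n+k} with ι(l) ≤ n such that the coordinate projection Π_ι : ℝ^{n+k} → ℝ^d, x ↦ (x_{ι(1)}, …, x_{ι(d)}), restricted to M, is a C¹ immersion. Then for every y ∈ Π_n(M), every connected component C of the fiber M_y = {z ∈ ℝ^k : (y, z) ∈ M} has nonempty frontier, i.e. (closure of C) \ C ≠ ∅. -/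
/-- The coordinate projection `Π_ι : ℝ^{n+k} → ℝ^d`, `x ↦ (x_{ι(1)}, …, x_{ι(d)})`,
as a linear map. -/
noncomputable def projAlong {N d : ℕ} (ι : Fin d → Fin N) :
    (Fin N → ℝ) →ₗ[ℝ] (Fin d → ℝ) :=
  LinearMap.funLeft ℝ ℝ ι

open Filter Topology Module

theorem LinearMap.eq_zero_of_mem_range_of_surjective_comp {K V W G : Type*} [Field K]
    [AddCommGroup V] [Module K V] [AddCommGroup W] [Module K W] [AddCommGroup G] [Module K G]
    [FiniteDimensional K W] [FiniteDimensional K G] {T : V →ₗ[K] W} {p : W →ₗ[K] G}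
    (hsurj : Function.Surjective (p ∘ₗ T)) (hrank : finrank K (range T) = finrank K G)
    {a : W} (ha : a ∈ range T) (hpa : p a = 0) : a = 0 := by
  have hinj : Function.Injective (p.domRestrict (range T)) := by
    refine (injective_iff_surjective_of_finrank_eq_finrank hrank).2 fun g => ?_
    obtain ⟨v, hv⟩ := hsurj g
    exact ⟨⟨T v, v, rfl⟩, hv⟩
  simpa using congrArg Subtype.val (@hinj ⟨a, ha⟩ 0 (by simpa using hpa))

theorem HasFDerivAt.comp_eq_id_of_eventually_leftInverse {𝕜 E F : Type*}
    [NontriviallyNormedField 𝕜] [NormedAddCommGroup E] [NormedSpace 𝕜 E]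
    [NormedAddCommGroup F] [NormedSpace 𝕜 F] {f : E → F} {g : F → E} {f' : E →L[𝕜] F}
    {g' : F →L[𝕜] E} {x : E} (hf : HasFDerivAt f f' x) (hg : HasFDerivAt g g' (f x))
    (hgf : ∀ᶠ y in 𝓝 x, g (f y) = y) : g'.comp f' = ContinuousLinearMap.id 𝕜 E :=
  (hg.comp x hf).unique ((hasFDerivAt_id x).congr_of_eventuallyEq hgf)

theorem eventually_eq_of_eventually_hasDerivAt_zero {E : Type*} [NormedAddCommGroup E]
    [NormedSpace ℝ E] {φ : ℝ → E} {a : ℝ} (hφ : ∀ᶠ t in 𝓝 a, HasDerivAt φ 0 t) :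
    ∀ᶠ t in 𝓝 a, φ t = φ a := by
  obtain ⟨ε, hε, hball⟩ := Metric.eventually_nhds_iff_ball.1 hφ
  refine Metric.eventually_nhds_iff_ball.2 ⟨ε, hε, fun t ht => ?_⟩
  exact Metric.isOpen_ball.is_const_of_deriv_eq_zero (convex_ball a ε).isPreconnected
    (fun s hs => (hball s hs).differentiableAt.differentiableWithinAt)
    (fun s hs => (hball s hs).deriv) ht (Metric.mem_ball_self hε)

theorem Submodule.mem_of_hasDerivAt_of_eventually_mem {E : Type*} [NormedAddCommGroup E]
    [NormedSpace ℝ E] {S : Submodule ℝ E} (hS : IsClosed (S : Set E)) {γ : ℝ → E} {v : E}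
    (hγ : HasDerivAt γ v 0) (hγS : ∀ᶠ t in 𝓝 0, γ t ∈ S) : v ∈ S := by
  refine hS.mem_of_tendsto (hasDerivAt_iff_tendsto_slope.1 hγ) ?_
  filter_upwards [hγS.filter_mono nhdsWithin_le_nhds] with t ht
  rw [slope_def_module]
  exact S.smul_mem _ (S.sub_mem ht hγS.self_of_nhds)

section ConstantRank

variable {E F G H : Type*} [NormedAddCommGroup E] [NormedSpace ℝ E]
  [NormedAddCommGroup F] [NormedSpace ℝ F] [NormedAddCommGroup G] [NormedSpace ℝ G]
  [NormedAddCommGroup H] [NormedSpace ℝ H]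

/-- As `(p ∘ f, q) ∘ h = id` near `w`, `p ∘ f'` is onto `G`, so `p` is injective on the
`finrank G`-dimensional `range f'`. -/
theorem HasFDerivAt.map_inr_eq_zero_of_finrank_range_eq [FiniteDimensional ℝ F]
    [FiniteDimensional ℝ G] {f : E → F} {f' : E →L[ℝ] F}
    {p : F →L[ℝ] G} {q : E →L[ℝ] H} {h : G × H → E} {h' : G × H →L[ℝ] E} {w : G × H}
    (hf : HasFDerivAt f f' (h w)) (hh : HasFDerivAt h h' w)
    (hinv : ∀ᶠ w' in 𝓝 w, (p (f (h w')), q (h w')) = w')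
    (hrank : finrank ℝ (f'.range) = finrank ℝ G) (y : H) :
    f' (h' (0, y)) = 0 := by
  have hid := hh.comp_eq_id_of_eventually_leftInverse
    ((p.hasFDerivAt.comp _ hf).prodMk q.hasFDerivAt) hinv
  have hsec : ∀ b, (p (f' (h' b)), q (h' b)) = b := fun b => congrArg (· b) hid
  refine LinearMap.eq_zero_of_mem_range_of_surjective_comp (p := (p : F →ₗ[ℝ] G))
    (fun r => ⟨h' (r, 0), congrArg Prod.fst (hsec (r, 0))⟩) hrank ⟨_, rfl⟩ ?_
  exact congrArg Prod.fst (hsec (0, y))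

variable [FiniteDimensional ℝ E]

theorem ContinuousLinearMap.exists_equivProd_range_ker (f' : E →L[ℝ] F) :
    ∃ (p : F →L[ℝ] f'.range) (q : E →L[ℝ] f'.ker)
      (e : E ≃L[ℝ] f'.range × f'.ker),
      (∀ y : f'.ker, q y = y) ∧ ∀ u, e u = (p (f' u), q u) := by
  obtain ⟨p, hp⟩ := Submodule.ClosedComplemented.of_finiteDimensional (f'.range)
  obtain ⟨q, hq⟩ := Submodule.ClosedComplemented.of_finiteDimensional (f'.ker)
  have hpf : ∀ u, p (f' u) = ⟨f' u, LinearMap.mem_range_self _ u⟩ := fun u => hp ⟨_, _⟩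
  refine ⟨p, q, ContinuousLinearMap.equivProdOfSurjectiveOfIsCompl (p ∘L f') q
    (LinearMap.range_eq_top.2 (by rintro ⟨_, u, rfl⟩; exact ⟨u, hpf u⟩))
    (LinearMap.range_eq_top.2 fun y => ⟨_, hq y⟩) ?_, hq, fun _ => rfl⟩
  convert LinearMap.isCompl_of_proj (f := (q : E →ₗ[ℝ] f'.ker)) hq using 1
  ext u
  simp [hpf, Submodule.mk_eq_zero]

/-- The curve is `t ↦ g⁻¹ (g x₀ + t • (0, v))` for the local diffeomorphism
`g = (p ∘ f, q) : E → range f'(x₀) × ker f'(x₀)`; along it `p ∘ f` is constant, and by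
`HasFDerivAt.map_inr_eq_zero_of_finrank_range_eq` so is `f`. -/
theorem ContDiffAt.exists_curve_in_levelSet_of_constRank [FiniteDimensional ℝ F] {f : E → F}
    {x₀ : E}
    (hf : ContDiffAt ℝ 1 f x₀)
    (hrank : ∀ᶠ u in 𝓝 x₀, finrank ℝ ((fderiv ℝ f u).range) =
      finrank ℝ ((fderiv ℝ f x₀).range))
    {v : E} (hv : fderiv ℝ f x₀ v = 0) :
    ∃ κ : ℝ → E, κ 0 = x₀ ∧ HasDerivAt κ v 0 ∧
      ∀ᶠ t in 𝓝 0, ContinuousAt κ t ∧ f (κ t) = f x₀ := by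
  obtain ⟨p, q, e, hq, he⟩ := (fderiv ℝ f x₀).exists_equivProd_range_ker
  set g := fun u => (p (f u), q u)
  have hg : ContDiffAt ℝ 1 g x₀ := (p.contDiff.contDiffAt.comp x₀ hf).prodMk q.contDiff.contDiffAt
  have hgd : HasFDerivAt g (e : E →L[ℝ] _) x₀ :=
    ((p.hasFDerivAt.comp x₀ (hf.differentiableAt one_ne_zero).hasFDerivAt).prodMk
      q.hasFDerivAt).congr_fderiv (ContinuousLinearMap.ext fun u => (he u).symm)
  set hs := hg.hasStrictFDerivAt' hgd one_ne_zero
  set h := hs.localInverse g e x₀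
  set b : (fderiv ℝ f x₀).range × (fderiv ℝ f x₀).ker := (0, ⟨v, hv⟩)
  set ℓ := fun t : ℝ => g x₀ + t • b
  have hℓ : ∀ t, HasDerivAt ℓ b t := fun t => by
    simpa [ℓ] using ((hasDerivAt_id t).smul_const b).const_add (g x₀)
  have hℓ0 : ℓ 0 = g x₀ := by simp [ℓ]
  have hκ0 : h (ℓ 0) = x₀ := hℓ0 ▸ hs.localInverse_apply_image
  have hev : e.symm b = v :=
    e.symm_apply_eq.2 ((he v).trans (Prod.ext (by simp [hv, b]) (hq ⟨v, hv⟩))).symm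
  refine ⟨h ∘ ℓ, hκ0, hev ▸ (hℓ0 ▸ hs.to_localInverse.hasFDerivAt).comp_hasDerivAt 0 (hℓ 0), ?_⟩
  have hnear : ∀ᶠ w in 𝓝 (g x₀), ContDiffAt ℝ 1 h w ∧ (∀ᶠ w' in 𝓝 w, g (h w') = w') ∧
      ContDiffAt ℝ 1 f (h w) ∧
        finrank ℝ (fderiv ℝ f (h w)).range = finrank ℝ (fderiv ℝ f x₀).range :=
    (hg.to_localInverse hgd one_ne_zero).eventually (by norm_num) |>.and <|
      hs.eventually_right_inverse.eventually_nhds.and <|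
      hs.localInverse_tendsto.eventually ((hf.eventually (by norm_num)).and hrank)
  have hcurve : ∀ᶠ t in 𝓝 0, ContinuousAt (h ∘ ℓ) t ∧ HasDerivAt (f ∘ h ∘ ℓ) 0 t := by
    filter_upwards [(hℓ0 ▸ (hℓ 0).continuousAt.tendsto).eventually hnear]
      with t ⟨hhC, hinv, hfC, hr⟩
    have hh' := (hhC.differentiableAt one_ne_zero).hasFDerivAt
    have hfd := (hfC.differentiableAt one_ne_zero).hasFDerivAt
    have hκd := hh'.comp_hasDerivAt t (hℓ t)
    refine ⟨hκd.continuousAt, ?_⟩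
    rw [← hfd.map_inr_eq_zero_of_finrank_range_eq hh' hinv hr ⟨v, hv⟩]
    exact hfd.comp_hasDerivAt t hκd
  filter_upwards [hcurve,
    eventually_eq_of_eventually_hasDerivAt_zero (hcurve.mono fun _ => And.right)] with t ht hconst
  exact ⟨ht.1, hconst.trans (congrArg f hκ0)⟩

end ConstantRank

theorem exists_isPreconnected_lt_of_hasDerivAt_ne_zero {X : Type*} [TopologicalSpace X]
    {F : Set X} {h : X → ℝ} {γ : ℝ → X} (hγ : ∀ᶠ t in 𝓝 0, ContinuousAt γ t ∧ γ t ∈ F)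
    {a : ℝ} (hd : HasDerivAt (h ∘ γ) a 0) (ha : a ≠ 0) :
    ∃ S ⊆ F, IsPreconnected S ∧ γ 0 ∈ S ∧ ∃ z ∈ S, h (γ 0) < h z := by
  obtain ⟨ε, hε, hball⟩ := Metric.eventually_nhds_iff_ball.1 hγ
  refine ⟨γ '' Metric.ball 0 ε, ?_, ?_, ⟨0, Metric.mem_ball_self hε, rfl⟩, ?_⟩
  · rintro - ⟨t, ht, rfl⟩
    exact (hball t ht).2
  · exact (convex_ball (0 : ℝ) ε).isPreconnected.image γ
      fun t ht => (hball t ht).1.continuousWithinAt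
  · by_contra! hle
    refine ha (IsLocalMax.hasDerivAt_eq_zero ?_ hd)
    filter_upwards [Metric.ball_mem_nhds 0 hε] with t ht
    exact hle _ ⟨t, ht, rfl⟩

theorem Bornology.IsBounded.closure_diff_connectedComponentIn_nonempty {X : Type*}
    [PseudoMetricSpace X] [ProperSpace X] {F : Set X} (hF : Bornology.IsBounded F)
    {h : X → ℝ} (hh : ContinuousOn h F)
    (hlt : ∀ z ∈ F, ∃ S ⊆ F, IsPreconnected S ∧ z ∈ S ∧ ∃ z' ∈ S, h z < h z')
    {z : X} (hz : z ∈ F) :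
    (closure (connectedComponentIn F z) \ connectedComponentIn F z).Nonempty := by
  set C := connectedComponentIn F z
  by_contra hempty
  have hCF : C ⊆ F := connectedComponentIn_subset F z
  have hC : IsCompact C := Metric.isCompact_of_isClosed_isBounded
    (isClosed_of_closure_subset (Set.sdiff_eq_empty.1 (Set.not_nonempty_iff_eq_empty.1 hempty)))
    (hF.subset hCF)
  obtain ⟨m, hmC, hmax⟩ := hC.exists_isMaxOn ⟨z, mem_connectedComponentIn hz⟩ (hh.mono hCF)
  obtain ⟨S, hSF, hS, hmS, z', hz'S, hlt'⟩ := hlt m (hCF hmC)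
  have hSC : S ⊆ C :=
    (hS.subset_connectedComponentIn hmS hSF).trans (connectedComponentIn_eq hmC).ge
  exact (hmax (hSC hz'S)).not_gt hlt'

/-- The subspace `ℝ^d × {0}` of `ℝ^N`. -/
def coordSubspace (N d : ℕ) : Submodule ℝ (Fin N → ℝ) :=
  Submodule.pi {i | d ≤ (i : ℕ)} fun _ => ⊥

theorem mem_coordSubspace {N d : ℕ} {y : Fin N → ℝ} :
    y ∈ coordSubspace N d ↔ ∀ i : Fin N, d ≤ (i : ℕ) → y i = 0 := by
  simp [coordSubspace, Submodule.mem_pi]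

noncomputable def zeroExtend (d N : ℕ) : (Fin d → ℝ) →L[ℝ] (Fin N → ℝ) :=
  ContinuousLinearMap.pi fun i => if h : (i : ℕ) < d then ContinuousLinearMap.proj ⟨i, h⟩ else 0

theorem zeroExtend_apply {d N : ℕ} (u : Fin d → ℝ) (i : Fin N) :
    zeroExtend d N u i = if h : (i : ℕ) < d then u ⟨i, h⟩ else 0 := by
  unfold zeroExtend; split_ifs <;> simp [*]

theorem zeroExtend_injective {d N : ℕ} (hdN : d ≤ N) : Function.Injective (zeroExtend d N) :=
  fun u u' h => funext fun j => by
    simpa [zeroExtend_apply] using congrFun h ⟨j, j.2.trans_le hdN⟩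

theorem range_zeroExtend {d N : ℕ} (hdN : d ≤ N) :
    LinearMap.range (zeroExtend d N).toLinearMap = coordSubspace N d := by
  ext y
  rw [mem_coordSubspace]
  constructor
  · rintro ⟨u, rfl⟩ i hi
    simp [zeroExtend_apply, hi.not_gt]
  · refine fun hy => ⟨fun j => y ⟨j, j.2.trans_le hdN⟩, funext fun i => ?_⟩
    simp only [ContinuousLinearMap.coe_coe, zeroExtend_apply]
    split_ifs with h
    · rfl
    · exact (hy i (not_lt.1 h)).symm

/-- The data that `IsC1Submanifold N d M` provides around one point. -/
structure SubmanifoldChart (N d : ℕ) (M : Set (Fin N → ℝ)) where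
  U : Set (Fin N → ℝ)
  V : Set (Fin N → ℝ)
  φ : (Fin N → ℝ) → (Fin N → ℝ)
  ψ : (Fin N → ℝ) → (Fin N → ℝ)
  isOpen_U : IsOpen U
  isOpen_V : IsOpen V
  contDiffOn_φ : ContDiffOn ℝ 1 φ U
  contDiffOn_ψ : ContDiffOn ℝ 1 ψ V
  mapsTo_φ : ∀ y ∈ U, φ y ∈ V
  mapsTo_ψ : ∀ y ∈ V, ψ y ∈ U
  left_inv : ∀ y ∈ U, ψ (φ y) = y
  right_inv : ∀ y ∈ V, φ (ψ y) = y
  image_eq : φ '' (U ∩ M) = V ∩ coordSubspace N d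

theorem IsC1Submanifold.exists_chart {N d : ℕ} {M : Set (Fin N → ℝ)}
    (hM : IsC1Submanifold N d M) {x : Fin N → ℝ} (hx : x ∈ M) :
    ∃ c : SubmanifoldChart N d M, x ∈ c.U := by
  obtain ⟨U, V, φ, ψ, hU, hV, hxU, hφ, hψ, hφV, hψU, hψφ, hφψ, himage⟩ := hM x hx
  refine ⟨⟨U, V, φ, ψ, hU, hV, hφ, hψ, hφV, hψU, hψφ, hφψ, ?_⟩, hxU⟩
  rw [himage]; ext y; simp [mem_coordSubspace]

namespace SubmanifoldChart

variable {N d : ℕ} {M : Set (Fin N → ℝ)} (c : SubmanifoldChart N d M)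

theorem φ_mem {m : Fin N → ℝ} (hm : m ∈ c.U ∩ M) : c.φ m ∈ c.V ∩ coordSubspace N d :=
  c.image_eq ▸ ⟨m, hm, rfl⟩

theorem ψ_mem {w : Fin N → ℝ} (hw : w ∈ c.V ∩ coordSubspace N d) : c.ψ w ∈ c.U ∩ M := by
  obtain ⟨m, hm, rfl⟩ := c.image_eq.symm ▸ hw
  rwa [c.left_inv m hm.1]

theorem hasFDerivAt_φ {y : Fin N → ℝ} (hy : y ∈ c.U) : HasFDerivAt c.φ (fderiv ℝ c.φ y) y :=
  ((c.contDiffOn_φ.contDiffAt (c.isOpen_U.mem_nhds hy)).differentiableAt one_ne_zero).hasFDerivAt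

theorem hasFDerivAt_ψ {w : Fin N → ℝ} (hw : w ∈ c.V) : HasFDerivAt c.ψ (fderiv ℝ c.ψ w) w :=
  ((c.contDiffOn_ψ.contDiffAt (c.isOpen_V.mem_nhds hw)).differentiableAt one_ne_zero).hasFDerivAt

theorem fderiv_ψ_comp_fderiv_φ {y : Fin N → ℝ} (hy : y ∈ c.U) :
    (fderiv ℝ c.ψ (c.φ y)).comp (fderiv ℝ c.φ y) = ContinuousLinearMap.id ℝ _ :=
  (c.hasFDerivAt_φ hy).comp_eq_id_of_eventually_leftInverse (c.hasFDerivAt_ψ (c.mapsTo_φ y hy))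
    (eventually_of_mem (c.isOpen_U.mem_nhds hy) c.left_inv)

theorem injective_fderiv_ψ {w : Fin N → ℝ} (hw : w ∈ c.V) :
    Function.Injective (fderiv ℝ c.ψ w) := by
  have hid := (c.hasFDerivAt_ψ hw).comp_eq_id_of_eventually_leftInverse
    (c.hasFDerivAt_φ (c.mapsTo_ψ w hw)) (eventually_of_mem (c.isOpen_V.mem_nhds hw) c.right_inv)
  exact Function.LeftInverse.injective fun v => congrArg (· v) hid

theorem tangentSpaceAt_eq {m : Fin N → ℝ} (hm : m ∈ c.U ∩ M) :
    tangentSpaceAt N M m = (coordSubspace N d).map (fderiv ℝ c.ψ (c.φ m)).toLinearMap := by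
  have hφm := c.φ_mem hm
  apply le_antisymm
  · rw [tangentSpaceAt, Submodule.span_le]
    rintro v ⟨γ, rfl, hγM, hγ⟩
    have hγU : ∀ᶠ t in 𝓝 0, γ t ∈ c.U := hγ.continuousAt (c.isOpen_U.mem_nhds hm.1)
    have hmem : fderiv ℝ c.φ (γ 0) v ∈ coordSubspace N d := by
      refine Submodule.mem_of_hasDerivAt_of_eventually_mem
        (Submodule.closed_of_finiteDimensional _) ((c.hasFDerivAt_φ hm.1).comp_hasDerivAt 0 hγ) ?_
      filter_upwards [hγU, hγM] with t hU hM using (c.φ_mem ⟨hU, hM⟩).2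
    exact ⟨_, hmem, congrArg (· v) (c.fderiv_ψ_comp_fderiv_φ hm.1)⟩
  · rintro _ ⟨s, hs, rfl⟩
    refine Submodule.subset_span
      ⟨fun t => c.ψ (c.φ m + t • s), by simp [c.left_inv m hm.1], ?_, ?_⟩
    · have hline : Continuous fun t : ℝ => c.φ m + t • s := by fun_prop
      have hV : ∀ᶠ t in 𝓝 (0 : ℝ), c.φ m + t • s ∈ c.V :=
        hline.continuousAt.preimage_mem_nhds (by simpa using c.isOpen_V.mem_nhds hφm.1)
      filter_upwards [hV] with t ht
      exact (c.ψ_mem ⟨ht, (coordSubspace N d).add_mem hφm.2 ((coordSubspace N d).smul_mem t hs)⟩).2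
    · have hψ : HasFDerivAt c.ψ (fderiv ℝ c.ψ (c.φ m)) (c.φ m + (0 : ℝ) • s) := by
        simpa using c.hasFDerivAt_ψ hφm.1
      have hline : HasDerivAt (fun t : ℝ => c.φ m + t • s) s 0 := by
        simpa using ((hasDerivAt_id (0 : ℝ)).smul_const s).const_add (c.φ m)
      exact hψ.comp_hasDerivAt (0 : ℝ) hline

end SubmanifoldChart

theorem IsC1Submanifold.exists_localParametrization {N d : ℕ} {M : Set (Fin N → ℝ)}
    (hM : IsC1Submanifold N d M) (hdN : d ≤ N) {x : Fin N → ℝ} (hx : x ∈ M) :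
    ∃ P : (Fin d → ℝ) → (Fin N → ℝ), P 0 = x ∧ ContDiffAt ℝ 1 P 0 ∧
      Function.Injective (fderiv ℝ P 0) ∧ ∀ᶠ u in 𝓝 0, P u ∈ M ∧
        tangentSpaceAt N M (P u) = LinearMap.range (fderiv ℝ P u).toLinearMap := by
  obtain ⟨c, hxU⟩ := hM.exists_chart hx
  have hφx := c.φ_mem ⟨hxU, hx⟩
  set e := zeroExtend d N
  have hV : ∀ᶠ u in 𝓝 0, c.φ x + e u ∈ c.V :=
    (continuous_const.add e.continuous).continuousAt.preimage_mem_nhds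
      (by simpa using c.isOpen_V.mem_nhds hφx.1)
  have hP : ∀ u, c.φ x + e u ∈ c.V → c.ψ (c.φ x + e u) ∈ c.U ∩ M := fun u hu =>
    c.ψ_mem ⟨hu, (coordSubspace N d).add_mem hφx.2 ((range_zeroExtend hdN).le ⟨u, rfl⟩)⟩
  have hPd : ∀ u, c.φ x + e u ∈ c.V → HasFDerivAt (fun u => c.ψ (c.φ x + e u))
      ((fderiv ℝ c.ψ (c.φ x + e u)).comp e) u := fun u hu =>
    (c.hasFDerivAt_ψ hu).comp u (e.hasFDerivAt.const_add _)
  have hV0 : c.φ x + e 0 ∈ c.V := hV.self_of_nhds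
  refine ⟨fun u => c.ψ (c.φ x + e u), by simp [c.left_inv x hxU], ?_, ?_, ?_⟩
  · exact (c.contDiffOn_ψ.contDiffAt (c.isOpen_V.mem_nhds hV0)).comp 0
      (contDiff_const.add e.contDiff).contDiffAt
  · rw [(hPd 0 hV0).fderiv]
    exact (c.injective_fderiv_ψ hV0).comp (zeroExtend_injective hdN)
  · filter_upwards [hV] with u hu
    refine ⟨(hP u hu).2, ?_⟩
    rw [(hPd u hu).fderiv, c.tangentSpaceAt_eq (hP u hu), c.right_inv _ hu,
      ContinuousLinearMap.toLinearMap_comp, LinearMap.range_comp, range_zeroExtend hdN]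

theorem Fin.isometry_append_left (n k : ℕ) (y : Fin n → ℝ) :
    Isometry fun z : Fin k → ℝ => Fin.append y z := fun z z' => by
  simp [Fin.edist_append_eq_max_edist]

/-- The coordinates `ι l, …, ι (d - 1)` are injective on the `(d - l)`-dimensional kernel of
`projFst n k ∘ T`, since the others are among the first `n`; so they map it onto `ℝ^{d - l}`. -/
theorem exists_projFst_eq_zero_apply_ne_zero {V : Type*} [AddCommGroup V] [Module ℝ V]
    [FiniteDimensional ℝ V] {n k d l : ℕ} (hV : finrank ℝ V = d) {ι : Fin d → Fin (n + k)}
    {T : V →ₗ[ℝ] (Fin (n + k) → ℝ)} (hT : ∀ v, projAlong ι (T v) = 0 → v = 0)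
    (hrank : finrank ℝ (LinearMap.range (projFst n k ∘ₗ T)) = l) (hld : l < d)
    (hιl : ∀ j : Fin d, (j : ℕ) < l → (ι j : ℕ) < n) :
    ∃ v, projFst n k (T v) = 0 ∧ T v (ι ⟨l, hld⟩) ≠ 0 := by
  set K := LinearMap.ker (projFst n k ∘ₗ T)
  have hK : finrank ℝ K = d - l := by
    have := LinearMap.finrank_range_add_finrank_ker (projFst n k ∘ₗ T)
    rw [hrank, hV] at this
    change l + finrank ℝ K = d at this
    omega
  set Q := (LinearMap.funLeft ℝ ℝ fun j : Fin (d - l) => ι ⟨l + j, by omega⟩) ∘ₗ T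
  have hQ : Function.Injective (Q.domRestrict K) := by
    refine (injective_iff_map_eq_zero _).2 fun ⟨v, hv⟩ hQv =>
      Subtype.ext (hT v (funext fun j => ?_))
    change T v (ι j) = 0
    rcases lt_or_ge (j : ℕ) l with hj | hj
    · exact congrFun (LinearMap.mem_ker.1 hv) ⟨ι j, hιl j hj⟩
    · simpa [Q, LinearMap.funLeft, show l + (j - l) = (j : ℕ) by omega]
        using congrFun hQv ⟨j - l, by omega⟩
  obtain ⟨⟨v, hv⟩, hQv⟩ := (LinearMap.injective_iff_surjective_of_finrank_eq_finrank
    (by simp [hK])).1 hQ (Pi.single ⟨0, by omega⟩ 1)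
  have hv1 : T v (ι ⟨l, hld⟩) = 1 := by
    simpa [Q, LinearMap.funLeft] using congrFun hQv ⟨0, by omega⟩
  exact ⟨v, LinearMap.mem_ker.1 hv, hv1 ▸ one_ne_zero⟩

section Projections

variable {n k d l : ℕ} {M : Set (Fin (n + k) → ℝ)} {ι : Fin d → Fin (n + k)}

theorem exists_curve_in_fiber_of_constRank (hM : IsC1Submanifold (n + k) d M) (hdN : d ≤ n + k)
    (hrank : ∀ z ∈ M,
      Module.finrank ℝ ((tangentSpaceAt (n + k) M z).map (projFst n k)) = l)
    (hld : l < d) (hιl : ∀ j : Fin d, (j : ℕ) < l → (ι j : ℕ) < n)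
    (himm : ∀ z ∈ M, ∀ v ∈ tangentSpaceAt (n + k) M z, projAlong ι v = 0 → v = 0)
    {x : Fin (n + k) → ℝ} (hx : x ∈ M) :
    ∃ Γ : ℝ → (Fin (n + k) → ℝ), ∃ w, Γ 0 = x ∧ HasDerivAt Γ w 0 ∧ w (ι ⟨l, hld⟩) ≠ 0 ∧
      ∀ᶠ t in 𝓝 0, ContinuousAt Γ t ∧ Γ t ∈ M ∧ projFst n k (Γ t) = projFst n k x := by
  obtain ⟨P, hP0, hPC, hPinj, hPM⟩ := hM.exists_localParametrization hdN hx
  set π := LinearMap.toContinuousLinearMap (projFst n k)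
  have hfd : ∀ᶠ u in 𝓝 0, fderiv ℝ (π ∘ P) u = π ∘L fderiv ℝ P u :=
    (hPC.eventually (by norm_num)).mono fun u hu =>
      (π.hasFDerivAt.comp u (hu.differentiableAt one_ne_zero).hasFDerivAt).fderiv
  have hrank' : ∀ᶠ u in 𝓝 0, finrank ℝ (fderiv ℝ (π ∘ P) u).range = l := by
    filter_upwards [hfd, hPM] with u hu hPu
    rw [hu, ContinuousLinearMap.toLinearMap_comp, LinearMap.range_comp, ← hPu.2]
    exact hrank _ hPu.1
  set T := fderiv ℝ P 0
  have hT : ∀ v, projAlong ι (T v) = 0 → v = 0 := fun v hv => hPinj <| by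
    rw [map_zero]
    refine himm x hx (T v) ?_ hv
    rw [← hP0, hPM.self_of_nhds.2]
    exact LinearMap.mem_range_self _ v
  obtain ⟨v, hv, hvι⟩ := exists_projFst_eq_zero_apply_ne_zero (finrank_fin_fun ℝ) hT
    (by rw [← hrank'.self_of_nhds, hfd.self_of_nhds]; rfl) hld hιl
  obtain ⟨κ, hκ0, hκd, hκ⟩ :=
    (π.contDiff.contDiffAt.comp 0 hPC).exists_curve_in_levelSet_of_constRank
    (hrank'.mono fun u hu => hu.trans hrank'.self_of_nhds.symm) (v := v)
    (by rw [hfd.self_of_nhds]; exact hv)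
  have hκt : Tendsto κ (𝓝 0) (𝓝 0) := hκ0 ▸ hκd.continuousAt.tendsto
  refine ⟨P ∘ κ, T v, by simp [hκ0, hP0], ?_, hvι, ?_⟩
  · have hPd : HasFDerivAt P T (κ 0) := hκ0 ▸ (hPC.differentiableAt one_ne_zero).hasFDerivAt
    exact hPd.comp_hasDerivAt 0 hκd
  · filter_upwards [hκ, hκt.eventually (hPM.and (hPC.eventually (by norm_num)))]
      with t ⟨hκc, hfκ⟩ ⟨⟨hPt, _⟩, hPCt⟩
    exact ⟨hPCt.continuousAt.comp hκc, hPt, by simpa [π, hP0] using hfκ⟩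

theorem exists_isPreconnected_fiber_lt (hM : IsC1Submanifold (n + k) d M) (hdN : d ≤ n + k)
    (hrank : ∀ z ∈ M,
      Module.finrank ℝ ((tangentSpaceAt (n + k) M z).map (projFst n k)) = l)
    (hld : l < d) (hιl : ∀ j : Fin d, (j : ℕ) < l → (ι j : ℕ) < n)
    (himm : ∀ z ∈ M, ∀ v ∈ tangentSpaceAt (n + k) M z, projAlong ι v = 0 → v = 0)
    {y : Fin n → ℝ} {z : Fin k → ℝ} (hz : Fin.append y z ∈ M) :
    ∃ S ⊆ {z : Fin k → ℝ | Fin.append y z ∈ M}, IsPreconnected S ∧ z ∈ S ∧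
      ∃ z' ∈ S, Fin.append y z (ι ⟨l, hld⟩) < Fin.append y z' (ι ⟨l, hld⟩) := by
  obtain ⟨Γ, w, hΓ0, hΓd, hw, hΓ⟩ :=
    exists_curve_in_fiber_of_constRank hM hdN hrank hld hιl himm hz
  set γ : ℝ → Fin k → ℝ := fun t i => Γ t (Fin.natAdd n i)
  have hγ : ∀ᶠ t in 𝓝 0, ContinuousAt γ t ∧ Fin.append y (γ t) = Γ t ∧ Γ t ∈ M := by
    filter_upwards [hΓ] with t ⟨hc, hM, hy⟩
    refine ⟨(continuous_pi fun i => continuous_apply _).continuousAt.comp hc, ?_, hM⟩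
    rw [show y = projFst n k (Γ t) from (hy.trans (funext (Fin.append_left y z))).symm]
    exact Fin.append_castAdd_natAdd
  have hγ0 : γ 0 = z := funext fun i => by simp [γ, hΓ0]
  have hd : HasDerivAt ((fun z' => Fin.append y z' (ι ⟨l, hld⟩)) ∘ γ) (w (ι ⟨l, hld⟩)) 0 :=
    (hasDerivAt_pi.1 hΓd _).congr_of_eventuallyEq
      (hγ.mono fun t ht => congrFun ht.2.1 (ι ⟨l, hld⟩))
  simpa only [hγ0] using exists_isPreconnected_lt_of_hasDerivAt_ne_zero
    (hγ.mono fun t ht => ⟨ht.1, show Fin.append y (γ t) ∈ M from ht.2.1 ▸ ht.2.2⟩) hd hw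

end Projections

theorem fiber_component_frontier_nonempty_general (n k d l : ℕ)
    (M : Set (Fin (n + k) → ℝ)) (hbd : Bornology.IsBounded M)
    (hM : IsC1Submanifold (n + k) d M)
    (hrank : ∀ z ∈ M,
      Module.finrank ℝ ((tangentSpaceAt (n + k) M z).map (projFst n k)) = l)
    (hld : l < d)
    (ι : Fin d → Fin (n + k)) (hι : StrictMono ι)
    (hιl : ∀ j : Fin d, (j : ℕ) < l → (ι j : ℕ) < n)
    (himm : ∀ z ∈ M, ∀ v ∈ tangentSpaceAt (n + k) M z, projAlong ι v = 0 → v = 0) :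
    ∀ y ∈ (projFst n k) '' M, ∀ z ∈ {z : Fin k → ℝ | Fin.append y z ∈ M},
      (closure (connectedComponentIn {z : Fin k → ℝ | Fin.append y z ∈ M} z) \
        connectedComponentIn {z : Fin k → ℝ | Fin.append y z ∈ M} z).Nonempty := by
  intro y _ z hz
  have hdN : d ≤ n + k := by simpa using Fintype.card_le_of_injective ι hι.injective
  have happ := Fin.isometry_append_left n k y
  exact (happ.antilipschitz.isBounded_preimage hbd).closure_diff_connectedComponentIn_nonempty
    ((continuous_apply _).comp happ.continuous).continuousOn
    (fun _ hz' => exists_isPreconnected_fiber_lt hM hdN hrank hld hιl himm hz') hz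

/-- Let `M ⊆ ℝ^{n+k}` be a bounded `d`-dimensional C¹ submanifold such that
`Π_n ↾ M` has constant rank `l < d`, and suppose there is a strictly increasing
`ι : {1,…,d} → {1,…,n+k}` with `ι(l) ≤ n` such that `Π_ι ↾ M` is an immersion.
Then every connected component of every fiber of `Π_n ↾ M` has nonempty frontier. -/
theorem fiber_component_frontier_nonempty (n k d l : ℕ) (hn : 1 ≤ n)
    (M : Set (Fin (n + k) → ℝ)) (hbd : Bornology.IsBounded M)
    (hM : IsC1Submanifold (n + k) d M)
    (hrank : ∀ z ∈ M,
      Module.finrank ℝ ((tangentSpaceAt (n + k) M z).map (projFst n k)) = l)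
    (hld : l < d)
    (ι : Fin d → Fin (n + k)) (hι : StrictMono ι)
    (hιl : ∀ j : Fin d, (j : ℕ) < l → (ι j : ℕ) < n)
    (himm : ∀ z ∈ M, ∀ v ∈ tangentSpaceAt (n + k) M z, projAlong ι v = 0 → v = 0) :
    ∀ y ∈ (projFst n k) '' M, ∀ z ∈ {z : Fin k → ℝ | Fin.append y z ∈ M},
      (closure (connectedComponentIn {z : Fin k → ℝ | Fin.append y z ∈ M} z) \
        connectedComponentIn {z : Fin k → ℝ | Fin.append y z ∈ M} z).Nonempty :=
  fiber_component_frontier_nonempty_general n k d l M hbd hM hrank hld ι hι hιl himm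
end

section
/- Let n ≥ 1, q ≥ 0, let r ∈ (0, ∞)ⁿ and let U = (−r₁, r₁) × ⋯ × (−rₙ, rₙ). Let f : U → ℝ be a C^{q+1} function such that for every 0 ≤ k ≤ q and every x ∈ U with xₙ = 0, the k-th partial derivative ∂ᵏf/∂xₙᵏ(x) = 0. Then there exists a continuous function g : U → ℝ such that f(x) = xₙ^{q+1}·g(x) for every x ∈ U, and g(x) = (1/(q+1)!)·∂^{q+1}f/∂xₙ^{q+1}(x) for every x ∈ U with xₙ = 0. -/
/-! Restricting `f` to the coordinate segment from `(x', 0)` to `x = (x', xₙ)`, Taylor's theorem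
with Lagrange remainder and the vanishing of the first `q` derivatives give
`f x = xₙ ^ (q + 1) / (q + 1)! * ∂ₙ^(q+1) f (x', c)` for some `c` between `0` and `xₙ`.
So off the hyperplane `g = f / xₙ ^ (q + 1)` is a value of `∂ₙ^(q+1) f / (q + 1)!` at a point
no farther (in the sup metric) from any point of the hyperplane than `x` itself, and continuity
of `g` across the hyperplane follows from continuity of `∂ₙ^(q+1) f`. -/

/-- Partial derivative in the last variable of a function on `ℝ^{n+1}`. -/
noncomputable def pderivLast (n : ℕ) (f : (Fin (n + 1) → ℝ) → ℝ) :
    (Fin (n + 1) → ℝ) → ℝ :=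
  fun x => fderiv ℝ f x (Pi.single (Fin.last n) 1)

open Set Filter Topology Function Nat

section DirectionalDerivative

variable {E F : Type*} [NormedAddCommGroup E] [NormedSpace ℝ E]
  [NormedAddCommGroup F] [NormedSpace ℝ F] {U : Set E} {v : E} {f : E → F} {m k : ℕ}

theorem ContDiffOn.iterate_fderiv_apply (hU : IsOpen U) (hf : ContDiffOn ℝ m f U) (hk : k ≤ m) :
    ContDiffOn ℝ (m - k : ℕ) ((fun g x => fderiv ℝ g x v)^[k] f) U := by
  induction k with
  | zero => simpa using hf
  | succ k ih =>
    rw [iterate_succ_apply']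
    refine ((ih (by omega)).fderiv_of_isOpen hU ?_).clm_apply contDiffOn_const
    norm_cast
    omega

theorem iteratedDeriv_comp_eq_iterate_fderiv_apply {γ : ℝ → E} (hγ : ∀ t, HasDerivAt γ v t)
    (hU : IsOpen U) (hf : ContDiffOn ℝ m f U) (hk : k ≤ m) {t : ℝ} (ht : γ t ∈ U) :
    iteratedDeriv k (f ∘ γ) t = ((fun g x => fderiv ℝ g x v)^[k] f) (γ t) := by
  induction k generalizing t with
  | zero => simp
  | succ k ih =>
    have hγU : ∀ᶠ s in 𝓝 t, γ s ∈ U :=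
      (hγ t).continuousAt.preimage_mem_nhds (hU.mem_nhds ht)
    have hdiff : DifferentiableAt ℝ ((fun g x => fderiv ℝ g x v)^[k] f) (γ t) :=
      ((hf.iterate_fderiv_apply hU (by omega)).contDiffAt (hU.mem_nhds ht)).differentiableAt
        (by norm_cast; omega)
    have hline : iteratedDeriv k (f ∘ γ) =ᶠ[𝓝 t]
        fun s => ((fun g x => fderiv ℝ g x v)^[k] f) (γ s) :=
      hγU.mono fun s hs => ih (by omega) hs
    rw [iteratedDeriv_succ, iterate_succ_apply', hline.deriv_eq]
    exact (hdiff.hasFDerivAt.comp_hasDerivAt t (hγ t)).deriv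

end DirectionalDerivative

theorem exists_mem_uIoo_eq_pow_mul_iteratedDeriv {u : ℝ → ℝ} {q : ℕ} {x₀ x : ℝ} (hx : x₀ ≠ x)
    (hu : ∀ t ∈ uIcc x₀ x, ContDiffAt ℝ (q + 1 : ℕ) u t)
    (hvanish : ∀ k ≤ q, iteratedDeriv k u x₀ = 0) :
    ∃ c ∈ uIoo x₀ x, u x = (x - x₀) ^ (q + 1) / (q + 1)! * iteratedDeriv (q + 1) u c := by
  obtain ⟨c, hc, hrem⟩ := taylor_mean_remainder_lagrange_iteratedDeriv hx
    fun t ht => by exact_mod_cast (hu t ht).contDiffWithinAt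
  have htaylor : taylorWithinEval u q (uIcc x₀ x) x₀ x = 0 := by
    rw [taylor_within_apply]
    refine Finset.sum_eq_zero fun k hk => ?_
    have hkq := Finset.mem_range_succ_iff.1 hk
    rw [iteratedDerivWithin_eq_iteratedDeriv (uniqueDiffOn_uIcc hx)
      ((hu x₀ left_mem_uIcc).of_le (by norm_cast; omega)) left_mem_uIcc, hvanish k hkq, smul_zero]
  refine ⟨c, hc, ?_⟩
  rw [htaylor, sub_zero] at hrem
  rw [hrem]
  ring

section Coordinates

variable {ι : Type*} [DecidableEq ι]

theorem exists_mem_uIcc_eq_pow_mul_iterate_fderiv_single [Fintype ι] {U : Set (ι → ℝ)}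
    (hU : IsOpen U) {f : (ι → ℝ) → ℝ} {q : ℕ} (hf : ContDiffOn ℝ (q + 1 : ℕ) f U)
    {i : ι} {x : ι → ℝ}
    (hseg : ∀ t ∈ uIcc 0 (x i), update x i t ∈ U)
    (hvanish : ∀ k ≤ q, ((fun g y => fderiv ℝ g y (Pi.single i 1))^[k] f) (update x i 0) = 0) :
    ∃ c ∈ uIcc 0 (x i), f x = x i ^ (q + 1) / (q + 1)! *
      ((fun g y => fderiv ℝ g y (Pi.single i 1))^[q + 1] f) (update x i c) := by
  have hline : ∀ k ≤ q + 1, ∀ t ∈ uIcc 0 (x i), iteratedDeriv k (f ∘ update x i) t =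
      ((fun g y => fderiv ℝ g y (Pi.single i 1))^[k] f) (update x i t) := fun k hk t ht =>
    iteratedDeriv_comp_eq_iterate_fderiv_apply (hasDerivAt_update x i) hU hf hk (hseg t ht)
  rcases eq_or_ne (x i) 0 with hx0 | hx0
  · refine ⟨0, by simp [hx0], ?_⟩
    have hf0 := hvanish 0 q.zero_le
    rw [update_eq_self_iff.2 hx0.symm] at hf0
    simpa [hx0] using hf0
  · obtain ⟨c, hc, hu⟩ := exists_mem_uIoo_eq_pow_mul_iteratedDeriv hx0.symm
      (fun t ht => (hf.contDiffAt (hU.mem_nhds (hseg t ht))).comp t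
        (contDiff_update _ x i).contDiffAt)
      (fun k hk => (hline k (by omega) 0 left_mem_uIcc).trans (hvanish k hk))
    refine ⟨c, uIoo_subset_uIcc_self hc, ?_⟩
    rwa [hline (q + 1) le_rfl c (uIoo_subset_uIcc_self hc), comp_apply, update_eq_self,
      sub_zero] at hu

omit [DecidableEq ι] in
theorem isOpen_polydisk [Finite ι] (r : ι → ℝ) : IsOpen {x : ι → ℝ | ∀ i, |x i| < r i} := by
  simp only [ofPred_forall]
  exact isOpen_iInter_of_finite fun i => isOpen_lt (continuous_apply i).abs continuous_const

theorem update_mem_polydisk {r x : ι → ℝ} (hx : ∀ j, |x j| < r j) {i : ι} {t : ℝ}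
    (ht : t ∈ uIcc 0 (x i)) (j : ι) : |update x i t j| < r j := by
  rcases eq_or_ne j i with rfl | hj
  · simpa using (show |t| ≤ |x j| by simpa using abs_sub_left_of_mem_uIcc ht).trans_lt (hx j)
  · simpa [hj] using hx j

theorem dist_update_le [Fintype ι] {π : ι → Type*} [∀ i, PseudoMetricSpace (π i)]
    {x y : ∀ i, π i} {i : ι} {c : π i} (h : dist c (x i) ≤ dist (y i) (x i)) :
    dist (update y i c) x ≤ dist y x := by
  refine (dist_pi_le_iff dist_nonneg).2 fun j => ?_
  rcases eq_or_ne j i with rfl | hj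
  · simpa using h.trans (dist_le_pi_dist y x j)
  · simpa [hj] using dist_le_pi_dist y x j

theorem ContinuousAt.of_eventually_exists_dist_le {X Y : Type*} [PseudoMetricSpace X]
    [TopologicalSpace Y] {g h : X → Y} {x : X} (hh : ContinuousAt h x) (hx : g x = h x)
    (H : ∀ᶠ y in 𝓝 x, ∃ z, dist z x ≤ dist y x ∧ g y = h z) : ContinuousAt g x := by
  intro V hV
  rw [hx] at hV
  rw [mem_map]
  obtain ⟨δ, hδ, hball⟩ := Metric.mem_nhds_iff.1 (hh hV)
  filter_upwards [H, Metric.ball_mem_nhds x hδ] with y ⟨z, hzy, hgz⟩ hy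
  exact show g y ∈ V from hgz ▸ hball (lt_of_le_of_lt hzy hy)

theorem continuousOn_ite_eq_zero_div_pow [Fintype ι] {U : Set (ι → ℝ)} (hU : IsOpen U)
    {f h : (ι → ℝ) → ℝ} (hf : ContinuousOn f U) (hh : ContinuousOn h U) {i : ι} {p : ℕ}
    (hdiv : ∀ y ∈ U, ∃ c ∈ uIcc 0 (y i), f y = y i ^ p * h (update y i c)) :
    ContinuousOn (fun y => if y i = 0 then h y else f y / y i ^ p) U := by
  refine fun x hx => ContinuousAt.continuousWithinAt ?_
  by_cases hx0 : x i = 0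
  · refine (hh.continuousAt (hU.mem_nhds hx)).of_eventually_exists_dist_le (if_pos hx0) ?_
    filter_upwards [hU.mem_nhds hx] with y hy
    by_cases hy0 : y i = 0
    · exact ⟨y, le_rfl, if_pos hy0⟩
    obtain ⟨c, hc, hfy⟩ := hdiv y hy
    refine ⟨update y i c, dist_update_le ?_, ?_⟩
    · simpa [Real.dist_eq, hx0] using abs_sub_left_of_mem_uIcc hc
    · rw [if_neg hy0, hfy]
      field_simp
  · have hquot : ContinuousAt (fun y => f y / y i ^ p) x :=
      (hf.continuousAt (hU.mem_nhds hx)).div ((continuous_apply i).pow p).continuousAt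
        (pow_ne_zero p hx0)
    refine hquot.congr ?_
    filter_upwards [(continuous_apply i).continuousAt.eventually_ne hx0] with y hy
    exact (if_neg hy).symm

end Coordinates

theorem monomial_division_general (n q : ℕ) (r : Fin (n + 1) → ℝ)
    (f : (Fin (n + 1) → ℝ) → ℝ)
    (hf : ContDiffOn ℝ (q + 1 : ℕ) f {x | ∀ i, |x i| < r i})
    (hvanish : ∀ k ≤ q, ∀ x ∈ {x : Fin (n + 1) → ℝ | ∀ i, |x i| < r i},
      x (Fin.last n) = 0 → (pderivLast n)^[k] f x = 0) :
    ∃ g : (Fin (n + 1) → ℝ) → ℝ,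
      ContinuousOn g {x | ∀ i, |x i| < r i} ∧
      (∀ x ∈ {x : Fin (n + 1) → ℝ | ∀ i, |x i| < r i},
        f x = (x (Fin.last n)) ^ (q + 1) * g x) ∧
      (∀ x ∈ {x : Fin (n + 1) → ℝ | ∀ i, |x i| < r i}, x (Fin.last n) = 0 →
        g x = (((q + 1).factorial : ℝ))⁻¹ * (pderivLast n)^[q + 1] f x) := by
  set U := {x : Fin (n + 1) → ℝ | ∀ i, |x i| < r i}
  have hU : IsOpen U := isOpen_polydisk r
  set h := fun y => (((q + 1)! : ℝ))⁻¹ * (pderivLast n)^[q + 1] f y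
  have hdiv : ∀ x ∈ U, ∃ c ∈ uIcc 0 (x (Fin.last n)),
      f x = x (Fin.last n) ^ (q + 1) * h (update x (Fin.last n) c) := fun x hx => by
    obtain ⟨c, hc, hfx⟩ := exists_mem_uIcc_eq_pow_mul_iterate_fderiv_single hU hf
      (fun _ => update_mem_polydisk hx)
      fun k hk => hvanish k hk _ (update_mem_polydisk hx left_mem_uIcc) (by simp)
    exact ⟨c, hc, by rw [hfx, div_eq_mul_inv, mul_assoc]; rfl⟩
  refine ⟨_, continuousOn_ite_eq_zero_div_pow hU hf.continuousOn
    (continuousOn_const.mul (hf.iterate_fderiv_apply hU le_rfl).continuousOn) hdiv,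
    fun x hx => ?_, fun x _ hx0 => if_pos hx0⟩
  obtain ⟨c, -, hfx⟩ := hdiv x hx
  split_ifs with hx0
  · simp [hfx, hx0]
  · field_simp

/-- Monomial division: if `f` is `C^{q+1}` on a polydisk `U ⊆ ℝ^{n+1}` and its
partial derivatives `∂ᵏf/∂xₙᵏ` vanish on `{xₙ = 0}` for `0 ≤ k ≤ q`, then
`f = xₙ^{q+1}·g` for a continuous `g` on `U` with
`g = (1/(q+1)!)·∂^{q+1}f/∂xₙ^{q+1}` on `{xₙ = 0}`. -/
theorem monomial_division (n q : ℕ) (r : Fin (n + 1) → ℝ) (hr : ∀ i, 0 < r i)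
    (f : (Fin (n + 1) → ℝ) → ℝ)
    (hf : ContDiffOn ℝ (q + 1 : ℕ) f {x | ∀ i, |x i| < r i})
    (hvanish : ∀ k ≤ q, ∀ x ∈ {x : Fin (n + 1) → ℝ | ∀ i, |x i| < r i},
      x (Fin.last n) = 0 → (pderivLast n)^[k] f x = 0) :
    ∃ g : (Fin (n + 1) → ℝ) → ℝ,
      ContinuousOn g {x | ∀ i, |x i| < r i} ∧
      (∀ x ∈ {x : Fin (n + 1) → ℝ | ∀ i, |x i| < r i},
        f x = (x (Fin.last n)) ^ (q + 1) * g x) ∧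
      (∀ x ∈ {x : Fin (n + 1) → ℝ | ∀ i, |x i| < r i}, x (Fin.last n) = 0 →
        g x = (((q + 1).factorial : ℝ))⁻¹ * (pderivLast n)^[q + 1] f x) :=
  monomial_division_general n q r f hf hvanish
end

section
/- There exists a function H : ℝ → ℝ with the following properties: (i) for every p ∈ ℕ there exists ε > 0 such that H is C^p on the interval (−ε, ε); (ii) there is no ε > 0 such that H is C^∞ on (−ε, ε); (iii) for every ε > 0, the restriction of H to ℝ \ (−ε, ε) is piecewise given by finitely many polynomials, i.e. ℝ \ (−ε, ε) can be partitioned into finitely many intervals on each of which H agrees with a polynomial. -/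
/-!
Take `H = ∑ₙ cₙ bₙ`, where `bₙ(x) = (x - 1/(n+3))₊^(n+1) (1/(n+1) - x)₊^(n+1)` is a polynomial
bump on `[1/(n+3), 1/(n+1)]`: it is `C^n` but not `C^(n+1)`, and the `cₙ` are small enough for
`∑ₙ cₙ ‖bₙ⁽ᵏ⁾‖_∞` to converge for every `k`. Away from `0` only finitely many bumps are nonzero,
and at most two of them on each interval between consecutive knots, so `H` is piecewise
polynomial there. On `(-1/(p+2), 1/(p+2))` the bumps `b₀, …, b_{p-1}` vanish and `H` is the tail
`∑_{n ≥ p} cₙ bₙ`, which is `C^p`. If `H` were `C^∞` near `0`, then near the left end `a` of the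
support of `b_m` the function `c_m b_m = H - ∑_{n > m} cₙ bₙ` would be `C^(m+1)`; as it vanishes
to the left of `a`, Taylor's theorem makes it `o((x - a)^(m+1))`, whereas `b_m(x)` is
asymptotic to a nonzero multiple of `(x - a)^(m+1)` as `x → a⁺`.
-/

open Set Filter Topology Asymptotics Polynomial

theorem ContDiffOn.isLittleO_pow_of_eqOn_zero_left {E : Type*} [NormedAddCommGroup E]
    [NormedSpace ℝ E] {s : Set ℝ} {a : ℝ} (hs : IsOpen s) (hs' : Convex ℝ s) (ha : a ∈ s)
    {n : ℕ} {f : ℝ → E} (hf : ContDiffOn ℝ n f s) (h0 : EqOn f 0 (s ∩ Iio a)) :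
    f =o[𝓝 a] fun x => (x - a) ^ n := by
  have hflat : ∀ {g : ℝ → E}, ContinuousOn g s → EqOn g 0 (s ∩ Iio a) → g a = 0 :=
    fun hg hg0 => tendsto_nhds_unique
      ((hg.continuousAt (hs.mem_nhds ha)).tendsto.mono_left nhdsWithin_le_nhds)
      (tendsto_const_nhds.congr' <| eventually_of_mem (inter_mem_nhdsWithin _ (hs.mem_nhds ha))
        fun _ hx => (hg0 ⟨hx.2, hx.1⟩).symm)
  induction n generalizing f with
  | zero =>
    simpa [isLittleO_one_iff, hflat hf.continuousOn h0] using
      (hf.continuousOn.continuousAt (hs.mem_nhds ha)).tendsto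
  | succ n ih =>
    have hderiv : ∀ x ∈ s, HasDerivWithinAt f (deriv f x) s x := fun x hx =>
      ((hf.differentiableOn (by simp) x hx).differentiableAt (hs.mem_nhds hx)).hasDerivAt
        |>.hasDerivWithinAt
    have hderiv0 : EqOn (deriv f) 0 (s ∩ Iio a) := fun x hx => by
      have : f =ᶠ[𝓝 x] fun _ => 0 := eventually_of_mem ((hs.inter isOpen_Iio).mem_nhds hx) h0
      simp [this.deriv_eq]
    have hf' : ContDiffOn ℝ n (deriv f) s := hf.deriv_of_isOpen hs (by norm_cast)
    have := hs'.isLittleO_pow_succ_real ha hderiv ((ih hf' hderiv0).mono nhdsWithin_le_nhds)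
    simpa [hflat hf.continuousOn h0, hs.nhdsWithin_eq ha] using this

def truncPow (n : ℕ) (x : ℝ) : ℝ := max x 0 ^ n

section TruncPow

variable {n k : ℕ} {x : ℝ}

theorem truncPow_nonneg (n : ℕ) (x : ℝ) : 0 ≤ truncPow n x :=
  pow_nonneg (le_max_right x 0) n

theorem truncPow_of_nonpos (hn : n ≠ 0) (hx : x ≤ 0) : truncPow n x = 0 := by
  simp [truncPow, max_eq_right hx, hn]

theorem truncPow_of_nonneg (hx : 0 ≤ x) : truncPow n x = x ^ n := by
  simp [truncPow, max_eq_left hx]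

theorem continuous_truncPow (n : ℕ) : Continuous (truncPow n) :=
  (continuous_id.max continuous_const).pow n

theorem hasDerivAt_truncPow (hn : n ≠ 0) (x : ℝ) :
    HasDerivAt (truncPow (n + 1)) ((n + 1) * truncPow n x) x := by
  rcases lt_trichotomy x 0 with hx | rfl | hx
  · rw [truncPow_of_nonpos hn hx.le, mul_zero]
    exact (hasDerivAt_const x 0).congr_of_eventuallyEq <|
      eventually_of_mem (Iio_mem_nhds hx) fun y hy => truncPow_of_nonpos (by simp) (le_of_lt hy)
  · have hleft : HasDerivWithinAt (truncPow (n + 1)) 0 (Iic 0) 0 :=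
      (hasDerivWithinAt_const _ _ 0).congr (fun y hy => truncPow_of_nonpos (by simp) hy)
        (truncPow_of_nonpos (by simp) le_rfl)
    have hright : HasDerivWithinAt (truncPow (n + 1)) 0 (Ici 0) 0 := by
      simpa [hn] using ((hasDerivAt_pow (n + 1) (0 : ℝ)).hasDerivWithinAt (s := Ici 0)).congr
        (fun y hy => truncPow_of_nonneg hy) (truncPow_of_nonneg le_rfl)
    simpa [truncPow_of_nonpos hn, Iic_union_Ici] using hleft.union hright
  · rw [truncPow_of_nonneg hx.le]
    refine (hasDerivAt_pow (n + 1) x).congr_of_eventuallyEq ?_ |>.congr_deriv (by push_cast; ring)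
    exact eventually_of_mem (Ioi_mem_nhds hx) fun y hy => truncPow_of_nonneg (le_of_lt hy)

theorem deriv_truncPow (hn : n ≠ 0) : deriv (truncPow (n + 1)) = fun x => (n + 1) * truncPow n x :=
  funext fun x => (hasDerivAt_truncPow hn x).deriv

theorem contDiff_truncPow (h : k < n) : ContDiff ℝ k (truncPow n) := by
  induction k generalizing n with
  | zero => exact contDiff_zero.2 (continuous_truncPow n)
  | succ k ih =>
    obtain ⟨m, rfl⟩ : ∃ m, n = m + 1 := ⟨n - 1, by omega⟩
    rw [Nat.cast_succ, contDiff_succ_iff_deriv, deriv_truncPow (by omega)]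
    exact ⟨fun x => (hasDerivAt_truncPow (by omega) x).differentiableAt, by simp,
      contDiff_const.mul (ih (by omega))⟩

theorem iteratedDeriv_truncPow (h : k < n) (x : ℝ) :
    iteratedDeriv k (truncPow n) x = n.descFactorial k * truncPow (n - k) x := by
  induction k generalizing n with
  | zero => simp
  | succ k ih =>
    obtain ⟨m, rfl⟩ : ∃ m, n = m + 1 := ⟨n - 1, by omega⟩
    rw [iteratedDeriv_succ', deriv_truncPow (by omega), iteratedDeriv_const_mul_field,
      ih (by omega), Nat.succ_descFactorial_succ, Nat.succ_sub_succ]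
    push_cast
    ring

end TruncPow

def bump (n : ℕ) (u v x : ℝ) : ℝ := truncPow n (x - u) * truncPow n (v - x)

section Bump

variable {n k : ℕ} {u v x : ℝ}

theorem bump_of_le (hn : n ≠ 0) (hx : x ≤ u) : bump n u v x = 0 := by
  rw [bump, truncPow_of_nonpos hn (by linarith), zero_mul]

theorem bump_of_ge (hn : n ≠ 0) (hx : v ≤ x) : bump n u v x = 0 := by
  rw [bump, truncPow_of_nonpos (x := v - x) hn (by linarith), mul_zero]

theorem bump_of_mem_Icc (hx : x ∈ Icc u v) : bump n u v x = (x - u) ^ n * (v - x) ^ n := by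
  rw [bump, truncPow_of_nonneg (by linarith [hx.1]), truncPow_of_nonneg (by linarith [hx.2])]

theorem contDiff_bump (h : k < n) : ContDiff ℝ k (bump n u v) :=
  ((contDiff_truncPow h).comp (contDiff_id.sub contDiff_const)).mul
    ((contDiff_truncPow h).comp (contDiff_const.sub contDiff_id))

theorem truncPow_mul_truncPow_le_one {i j : ℕ} (hi : i ≠ 0) (hj : j ≠ 0) (huv : v - u ≤ 1) :
    truncPow i (x - u) * truncPow j (v - x) ≤ 1 := by
  rcases le_or_gt x u with hxu | hux
  · simp [truncPow_of_nonpos hi (by linarith : x - u ≤ 0)]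
  rcases le_or_gt v x with hvx | hxv
  · simp [truncPow_of_nonpos hj (by linarith : v - x ≤ 0)]
  rw [truncPow_of_nonneg (by linarith), truncPow_of_nonneg (by linarith)]
  exact mul_le_one₀ (pow_le_one₀ (by linarith) (by linarith)) (by positivity)
    (pow_le_one₀ (by linarith) (by linarith))

theorem abs_iteratedDeriv_bump_le (h : k < n) (huv : v - u ≤ 1) (x : ℝ) :
    |iteratedDeriv k (bump n u v) x| ≤ (2 * n) ^ k := by
  have hleft : ∀ i ≤ k, |iteratedDeriv i (fun y => truncPow n (y - u)) x| =
      n.descFactorial i * truncPow (n - i) (x - u) := fun i hi => by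
    rw [iteratedDeriv_comp_sub_const]
    beta_reduce
    rw [iteratedDeriv_truncPow (by omega),
      abs_of_nonneg (by positivity [truncPow_nonneg (n - i) (x - u)])]
  have hright : ∀ j ≤ k, |iteratedDeriv j (fun y => truncPow n (v - y)) x| =
      n.descFactorial j * truncPow (n - j) (v - x) := fun j hj => by
    rw [iteratedDeriv_comp_const_sub]
    beta_reduce
    rw [iteratedDeriv_truncPow (by omega), smul_eq_mul, abs_mul,
      abs_pow, abs_neg, abs_one, one_pow, one_mul,
      abs_of_nonneg (by positivity [truncPow_nonneg (n - j) (v - x)])]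
  have hterm : ∀ i ∈ Finset.range (k + 1),
      |k.choose i * iteratedDeriv i (fun y => truncPow n (y - u)) x *
        iteratedDeriv (k - i) (fun y => truncPow n (v - y)) x| ≤ k.choose i * (n : ℝ) ^ k := by
    intro i hi
    have hik : i ≤ k := Finset.mem_range_succ_iff.1 hi
    rw [abs_mul, abs_mul, Nat.abs_cast, hleft i hik, hright (k - i) (Nat.sub_le k i)]
    have hdesc : (n.descFactorial i * n.descFactorial (k - i) : ℝ) ≤ (n : ℝ) ^ k := by
      have := Nat.mul_le_mul (n.descFactorial_le_pow i) (n.descFactorial_le_pow (k - i))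
      rw [← pow_add, Nat.add_sub_cancel' hik] at this
      exact_mod_cast this
    calc (k.choose i : ℝ) * (n.descFactorial i * truncPow (n - i) (x - u)) *
          (n.descFactorial (k - i) * truncPow (n - (k - i)) (v - x))
        = k.choose i * (n.descFactorial i * n.descFactorial (k - i)) *
          (truncPow (n - i) (x - u) * truncPow (n - (k - i)) (v - x)) := by ring
      _ ≤ k.choose i * (n : ℝ) ^ k * 1 := by
        gcongr
        · positivity [truncPow_nonneg (n - i) (x - u), truncPow_nonneg (n - (k - i)) (v - x)]
        · exact truncPow_mul_truncPow_le_one (by omega) (by omega) huv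
      _ = k.choose i * (n : ℝ) ^ k := mul_one _
  have hu : ContDiff ℝ k fun y => truncPow n (y - u) :=
    (contDiff_truncPow h).comp (contDiff_id.sub contDiff_const)
  have hv : ContDiff ℝ k fun y => truncPow n (v - y) :=
    (contDiff_truncPow h).comp (contDiff_const.sub contDiff_id)
  rw [show bump n u v = (fun y => truncPow n (y - u)) * fun y => truncPow n (v - y) from rfl,
    iteratedDeriv_mul hu.contDiffAt hv.contDiffAt]
  calc _ ≤ ∑ i ∈ Finset.range (k + 1), (k.choose i : ℝ) * (n : ℝ) ^ k :=
        (Finset.abs_sum_le_sum_abs _ _).trans (Finset.sum_le_sum hterm)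
    _ = (2 * n) ^ k := by
      rw [← Finset.sum_mul, ← Nat.cast_sum, Nat.sum_range_choose, mul_pow]
      push_cast
      ring

theorem bump_not_isLittleO (huv : u < v) : ¬ bump n u v =o[𝓝[>] u] fun x => (x - u) ^ n := by
  intro h
  have hquot : (fun x => bump n u v x / (x - u) ^ n) =ᶠ[𝓝[>] u] fun x => (v - x) ^ n :=
    eventually_of_mem (Ioo_mem_nhdsGT huv) fun x hx => by
      dsimp only
      rw [bump_of_mem_Icc (Ioo_subset_Icc_self hx), mul_div_cancel_left₀ _
        (pow_ne_zero _ (sub_pos.2 hx.1).ne')]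
  have hlim : Tendsto (fun x => (v - x) ^ n) (𝓝[>] u) (𝓝 ((v - u) ^ n)) :=
    ((continuous_const.sub continuous_id).pow n).continuousAt.tendsto.mono_left
      nhdsWithin_le_nhds
  exact pow_ne_zero n (sub_pos.2 huv).ne'
    (tendsto_nhds_unique hlim (h.tendsto_div_nhds_zero.congr' hquot))

end Bump

def IsPiecewisePolyOn (f : ℝ → ℝ) (S : Set ℝ) : Prop :=
  ∃ (k : ℕ) (I : Fin k → Set ℝ) (P : Fin k → ℝ[X]),
    (∀ i, (I i).OrdConnected) ∧ (∀ i j, i ≠ j → Disjoint (I i) (I j)) ∧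
    (⋃ i, I i) = S ∧ ∀ i, ∀ x ∈ I i, f x = (P i).eval x

section IsPiecewisePolyOn

variable {f : ℝ → ℝ} {S T : Set ℝ}

theorem isPiecewisePolyOn_of_eqOn (hS : S.OrdConnected) (P : ℝ[X])
    (h : EqOn f (fun x => P.eval x) S) : IsPiecewisePolyOn f S :=
  ⟨1, fun _ => S, fun _ => P, fun _ => hS, fun i j hij => (hij (Subsingleton.elim i j)).elim,
    iUnion_const S, fun _ => h⟩

theorem IsPiecewisePolyOn.union (hS : IsPiecewisePolyOn f S) (hT : IsPiecewisePolyOn f T)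
    (hST : Disjoint S T) : IsPiecewisePolyOn f (S ∪ T) := by
  obtain ⟨k, I, P, hI, hIdisj, rfl, hIP⟩ := hS
  obtain ⟨l, J, Q, hJ, hJdisj, rfl, hJQ⟩ := hT
  refine ⟨k + l, Fin.append I J, Fin.append P Q, fun i => ?_, fun i j hij => ?_, ?_, fun i => ?_⟩
  · induction i using Fin.addCases <;> simp [hI, hJ]
  · induction i using Fin.addCases <;> induction j using Fin.addCases <;>
      simp only [Fin.append_left, Fin.append_right] <;> simp at hij
    · exact hIdisj _ _ hij
    · exact hST.mono (subset_iUnion I _) (subset_iUnion J _)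
    · exact hST.symm.mono (subset_iUnion J _) (subset_iUnion I _)
    · exact hJdisj _ _ hij
  · refine subset_antisymm (iUnion_subset ((Fin.forall_fin_add _).2 ⟨fun i => ?_, fun j => ?_⟩))
      (union_subset (iUnion_subset fun i => ?_) (iUnion_subset fun j => ?_))
    · simpa using subset_union_of_subset_left (subset_iUnion I i) _
    · simpa using subset_union_of_subset_right (subset_iUnion J j) _
    · simpa using subset_iUnion (Fin.append I J) (Fin.castAdd l i)
    · simpa using subset_iUnion (Fin.append I J) (Fin.natAdd k j)
  · induction i using Fin.addCases with
    | left i => simpa using hIP i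
    | right j => simpa using hJQ j

theorem IsPiecewisePolyOn.inter (hS : IsPiecewisePolyOn f S) (hT : T.OrdConnected) :
    IsPiecewisePolyOn f (S ∩ T) := by
  obtain ⟨k, I, P, hI, hIdisj, rfl, hIP⟩ := hS
  exact ⟨k, fun i => I i ∩ T, P, fun i => (hI i).inter hT,
    fun i j hij => (hIdisj i j hij).mono inter_subset_left inter_subset_left,
    (iUnion_inter T I).symm, fun i x hx => hIP i x hx.1⟩

end IsPiecewisePolyOn

namespace BumpSeries

noncomputable def knot (n : ℕ) : ℝ := (n + 1 : ℝ)⁻¹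

/-- Chosen so that `coeff n * (2 * (n + 1)) ^ n = (1 / 2) ^ n`: the derivatives of order at most
`n` of the bump in `term n` are bounded by `(2 * (n + 1)) ^ n`. -/
noncomputable def coeff (n : ℕ) : ℝ := (4 * (n + 1) : ℝ)⁻¹ ^ n

noncomputable def term (n : ℕ) (x : ℝ) : ℝ := coeff n * bump (n + 1) (knot (n + 2)) (knot n) x

noncomputable def termPoly (n : ℕ) : ℝ[X] :=
  C (coeff n) * ((X - C (knot (n + 2))) ^ (n + 1) * (C (knot n) - X) ^ (n + 1))

noncomputable def tail (p : ℕ) (x : ℝ) : ℝ := ∑' n, term (n + p) x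

noncomputable def _root_.bumpSeries (x : ℝ) : ℝ := ∑' n, term n x

variable {m n k p : ℕ} {x : ℝ}

theorem knot_pos (n : ℕ) : 0 < knot n := by unfold knot; positivity

@[simp] theorem knot_zero : knot 0 = 1 := by simp [knot]

theorem knot_le_knot (h : m ≤ n) : knot n ≤ knot m := by
  unfold knot; gcongr

theorem knot_lt_knot (h : m < n) : knot n < knot m := by
  unfold knot; gcongr

theorem exists_knot_le {ε : ℝ} (hε : 0 < ε) : ∃ n, knot n ≤ ε := by
  obtain ⟨n, hn⟩ := exists_nat_one_div_lt hε
  exact ⟨n, by simpa [knot, one_div] using hn.le⟩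

theorem coeff_pos (n : ℕ) : 0 < coeff n := by unfold coeff; positivity

theorem term_eq_zero_of_le (hx : x ≤ knot (n + 2)) : term n x = 0 := by
  rw [term, bump_of_le n.succ_ne_zero hx, mul_zero]

theorem term_eq_zero_of_ge (hx : knot n ≤ x) : term n x = 0 := by
  rw [term, bump_of_ge n.succ_ne_zero hx, mul_zero]

theorem term_eq_eval (hx : x ∈ Icc (knot (n + 2)) (knot n)) : term n x = (termPoly n).eval x := by
  simp [term, termPoly, bump_of_mem_Icc hx]

theorem contDiff_term (hk : k ≤ n) : ContDiff ℝ k (term n) :=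
  contDiff_const.mul (contDiff_bump (by omega))

theorem abs_iteratedDeriv_term_le (hk : k ≤ n) (x : ℝ) :
    |iteratedDeriv k (term n) x| ≤ (1 / 2) ^ n := by
  have hwidth : knot n - knot (n + 2) ≤ 1 := by
    linarith [knot_le_knot (Nat.zero_le n), knot_pos (n + 2), knot_zero]
  have hbase : (1 : ℝ) ≤ 2 * (n + 1) := by linarith [(n.cast_nonneg : (0 : ℝ) ≤ n)]
  calc |iteratedDeriv k (term n) x|
      = coeff n * |iteratedDeriv k (bump (n + 1) (knot (n + 2)) (knot n)) x| := by
        rw [show term n = fun y => coeff n * bump (n + 1) (knot (n + 2)) (knot n) y from rfl,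
          iteratedDeriv_const_mul_field, abs_mul, abs_of_pos (coeff_pos n)]
    _ ≤ coeff n * (2 * (n + 1)) ^ k := by
        have hbump := abs_iteratedDeriv_bump_le (n := n + 1) (k := k) (by omega) hwidth x
        push_cast at hbump
        exact mul_le_mul_of_nonneg_left hbump (coeff_pos n).le
    _ ≤ coeff n * (2 * (n + 1)) ^ n :=
        mul_le_mul_of_nonneg_left (pow_le_pow_right₀ hbase hk) (coeff_pos n).le
    _ = (1 / 2) ^ n := by
        rw [coeff, ← mul_pow]
        congr 1
        field_simp
        ring

theorem summable_term (x : ℝ) : Summable fun n => term n x :=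
  summable_geometric_two.of_norm_bounded fun n => by
    simpa using abs_iteratedDeriv_term_le (Nat.zero_le n) x

theorem contDiff_tail (p : ℕ) : ContDiff ℝ p (tail p) := by
  refine contDiff_tsum (v := fun _ n => (1 / 2 : ℝ) ^ (n + p)) (fun n => contDiff_term (by omega))
    (fun _ _ => (summable_nat_add_iff p).2 summable_geometric_two) fun k n x hk => ?_
  rw [norm_iteratedFDeriv_eq_norm_iteratedDeriv]
  exact abs_iteratedDeriv_term_le (by norm_cast at hk; omega) x

theorem bumpSeries_eq_sum_add_tail (p : ℕ) (x : ℝ) :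
    bumpSeries x = ∑ n ∈ Finset.range p, term n x + tail p x :=
  ((summable_term x).sum_add_tsum_nat_add p).symm

theorem sum_range_term_eq_zero (hx : x ≤ knot (p + 1)) : ∑ n ∈ Finset.range p, term n x = 0 :=
  Finset.sum_eq_zero fun n hn =>
    term_eq_zero_of_le (hx.trans (knot_le_knot (by simpa using hn)))

theorem bumpSeries_eq_tail (hx : x ≤ knot (p + 1)) : bumpSeries x = tail p x := by
  rw [bumpSeries_eq_sum_add_tail p, sum_range_term_eq_zero hx, zero_add]

theorem bumpSeries_eq_term_add_tail (hx : x ≤ knot (m + 1)) :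
    bumpSeries x = term m x + tail (m + 1) x := by
  rw [bumpSeries_eq_sum_add_tail (m + 1), Finset.sum_range_succ,
    sum_range_term_eq_zero hx, zero_add]

theorem bumpSeries_eq_zero_of_nonpos (hx : x ≤ 0) : bumpSeries x = 0 :=
  (tsum_congr fun _ => term_eq_zero_of_le (hx.trans (knot_pos _).le)).trans tsum_zero

theorem bumpSeries_eq_zero_of_one_le (hx : 1 ≤ x) : bumpSeries x = 0 :=
  (tsum_congr fun n => term_eq_zero_of_ge ((knot_le_knot n.zero_le).trans (by simpa))).trans
    tsum_zero

/-- For `j = 0` the truncated `j - 1` makes the index set `{0}`, which is still the right one. -/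
theorem bumpSeries_eq_eval_of_mem_Ico {j : ℕ} (hx : x ∈ Ico (knot (j + 1)) (knot j)) :
    bumpSeries x = (∑ n ∈ {j - 1, j}, termPoly n).eval x := by
  rw [bumpSeries, tsum_eq_sum (s := {j - 1, j}), eval_finsetSum]
  · refine Finset.sum_congr rfl fun n hn => term_eq_eval ⟨?_, ?_⟩
    · exact (knot_le_knot (by simp at hn; omega)).trans hx.1
    · exact hx.2.le.trans (knot_le_knot (by simp at hn; omega))
  · intro n hn
    simp only [Finset.mem_insert, Finset.mem_singleton, not_or] at hn
    rcases le_or_gt (n + 2) j with hnj | hjn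
    · exact term_eq_zero_of_le (hx.2.le.trans (knot_le_knot hnj))
    · exact term_eq_zero_of_ge ((knot_le_knot (by omega)).trans hx.1)

theorem isPiecewisePolyOn_bumpSeries_Ici_knot (j : ℕ) :
    IsPiecewisePolyOn bumpSeries (Ici (knot j)) := by
  induction j with
  | zero =>
    exact isPiecewisePolyOn_of_eqOn ordConnected_Ici 0 fun x hx =>
      by simpa using bumpSeries_eq_zero_of_one_le (by simpa using hx)
  | succ j ih =>
    rw [← Ico_union_Ici_eq_Ici (knot_le_knot j.le_succ)]
    exact (isPiecewisePolyOn_of_eqOn ordConnected_Ico _ fun x hx =>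
      bumpSeries_eq_eval_of_mem_Ico hx).union ih
      (Set.disjoint_left.2 fun x hx hx' => hx.2.not_ge hx')

theorem isPiecewisePolyOn_bumpSeries {ε : ℝ} (hε : 0 < ε) :
    IsPiecewisePolyOn bumpSeries (Ioo (-ε) ε)ᶜ := by
  obtain ⟨N, hN⟩ := exists_knot_le hε
  have hright : IsPiecewisePolyOn bumpSeries (Ici ε) := by
    simpa [Ici_inter_Ici, max_eq_right hN] using
      (isPiecewisePolyOn_bumpSeries_Ici_knot N).inter (ordConnected_Ici (a := ε))
  have hleft : IsPiecewisePolyOn bumpSeries (Iic (-ε)) :=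
    isPiecewisePolyOn_of_eqOn ordConnected_Iic 0 fun x hx => by
      simpa using bumpSeries_eq_zero_of_nonpos (by linarith [mem_Iic.1 hx])
  rw [show (Ioo (-ε) ε)ᶜ = Iic (-ε) ∪ Ici ε by ext x; simp [imp_iff_not_or]]
  exact hleft.union hright (Iic_disjoint_Ici.2 (by linarith))

theorem contDiffOn_bumpSeries (p : ℕ) :
    ContDiffOn ℝ p bumpSeries (Ioo (-knot (p + 1)) (knot (p + 1))) :=
  (contDiff_tail p).contDiffOn.congr fun _ hx => bumpSeries_eq_tail hx.2.le

theorem not_contDiffOn_bumpSeries {ε : ℝ} (hε : 0 < ε) :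
    ¬ ContDiffOn ℝ (⊤ : ℕ∞) bumpSeries (Ioo (-ε) ε) := by
  intro hsmooth
  obtain ⟨m, hm⟩ := exists_knot_le hε
  have hsub : Ioo 0 (knot (m + 1)) ⊆ Ioo (-ε) ε := fun x hx =>
    ⟨by linarith [hx.1], hx.2.trans_le ((knot_le_knot m.le_succ).trans hm)⟩
  have hterm : ContDiffOn ℝ (m + 1 : ℕ) (term m) (Ioo 0 (knot (m + 1))) := by
    refine (((hsmooth.of_le (by exact_mod_cast le_top)).mono hsub).sub
      (contDiff_tail (m + 1)).contDiffOn).congr fun x hx => ?_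
    rw [bumpSeries_eq_term_add_tail hx.2.le]
    ring
  have hflat : EqOn (term m) 0 (Ioo 0 (knot (m + 1)) ∩ Iio (knot (m + 2))) :=
    fun x hx => term_eq_zero_of_le hx.2.le
  have hsmall := hterm.isLittleO_pow_of_eqOn_zero_left isOpen_Ioo (convex_Ioo _ _)
    ⟨knot_pos _, knot_lt_knot (by omega)⟩ hflat
  exact bump_not_isLittleO (knot_lt_knot (by omega : m < m + 2))
    ((isLittleO_const_mul_left_iff (coeff_pos m).ne').1 (hsmall.mono nhdsWithin_le_nhds))

end BumpSeries

/-- There is a function `H : ℝ → ℝ` whose germ at `0` is weakly C^∞ (it is `C^p`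
on a neighborhood of `0` for every `p`) but not C^∞ (it is C^∞ on no neighborhood
of `0`), and whose restriction to the complement of any neighborhood of `0` is
piecewise given by finitely many polynomials. -/
theorem exists_weaklyCinfty_not_Cinfty_piecewise_poly :
    ∃ H : ℝ → ℝ,
      (∀ p : ℕ, ∃ ε > (0 : ℝ), ContDiffOn ℝ p H (Set.Ioo (-ε) ε)) ∧
      (¬ ∃ ε > (0 : ℝ), ContDiffOn ℝ (⊤ : ℕ∞) H (Set.Ioo (-ε) ε)) ∧
      (∀ ε > (0 : ℝ), ∃ (k : ℕ) (I : Fin k → Set ℝ) (P : Fin k → Polynomial ℝ),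
        (∀ i, (I i).OrdConnected) ∧
        (∀ i j, i ≠ j → Disjoint (I i) (I j)) ∧
        (⋃ i, I i) = (Set.Ioo (-ε) ε)ᶜ ∧
        ∀ i, ∀ x ∈ I i, H x = (P i).eval x) :=
  ⟨bumpSeries,
    fun p => ⟨BumpSeries.knot (p + 1), BumpSeries.knot_pos _, BumpSeries.contDiffOn_bumpSeries p⟩,
    fun ⟨_, hε, hsmooth⟩ => BumpSeries.not_contDiffOn_bumpSeries hε hsmooth,
    fun _ hε => BumpSeries.isPiecewisePolyOn_bumpSeries hε⟩
end
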